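/- arXiv:math/0107140 — 5 statements merged into one kernel-verified Lean document; each statement's English description precedes it below -/
import Mathlib

section
/- For each n ≥ 2 there exist constants c, C > 0 depending only on n and d such that for any vertices x_1,...,x_n in Z^d, c·∏_{i=1}^{n-1} ρ(x_i, {x_{i+1},...,x_n}) ≤ ⟨x_1...x_n⟩ ≤ C·∏_{i=1}^{n-1} ρ(x_i, {x_{i+1},...,x_n}). -/
open MeasureTheory ProbabilityTheory Finset

set_option maxHeartbeats 1000000

abbrev Zd (d : ℕ) := Fin d → ℤ

noncomputable def br {d : ℕ} (x y : Zd d) : ℝ := 1 + ∑ i, |(x i : ℝ) - y i|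

lemma br_symm {d : ℕ} (x y : Zd d) : br x y = br y x := by
  simp [br, abs_sub_comm]

noncomputable def spread {d : ℕ} (W : Finset (Zd d)) : ℝ :=
  sInf {p | ∃ E : Finset (Sym2 {x // x ∈ W}),
    (SimpleGraph.fromEdgeSet (↑E : Set (Sym2 {x // x ∈ W}))).IsTree ∧ (∀ e ∈ E, ¬ e.IsDiag) ∧
    p = ∏ e ∈ E, Sym2.lift ⟨fun u v => br u.1 v.1, fun u v => br_symm u.1 v.1⟩ e}

noncomputable def rho {d : ℕ} (V W : Finset (Zd d)) : ℝ :=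
  sInf {p | ∃ v ∈ V, ∃ w ∈ W, p = br v w}

abbrev RRel (d : ℕ) := Zd d × Zd d → Prop

def HasStochDim {Ω : Type*} [MeasurableSpace Ω] {d : ℕ} (P : Measure Ω)
    (R : Ω → RRel d) (δ : ℝ) : Prop :=
  0 < δ ∧ δ ≤ d ∧ ∃ C : ℝ, 0 < C ∧ ∀ x z y w : Zd d,
    br x z ^ (δ - d) ≤ C * (P {ω | R ω (x, z)}).toReal ∧
    (P {ω | R ω (x, z) ∧ R ω (y, w)}).toReal ≤
      C * br x z ^ (δ - d) * br y w ^ (δ - d) + C * spread {x, z, y, w} ^ (δ - d)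

def relComp {Ω : Type*} {d : ℕ} (L R : Ω → RRel d) : Ω → RRel d :=
  fun ω p => ∃ y, L ω (p.1, y) ∧ R ω (y, p.2)

def relRComp {Ω : Type*} {d : ℕ} (L R : Ω → RRel d) : Ω → RRel d :=
  fun ω p => ∃ y, L ω (p.1, y) ∧ R ω (y, p.2) ∧ br p.1 p.2 ≤ min (br p.1 y) (br y p.2)

def leftTail {Ω : Type*} [MeasurableSpace Ω] {d : ℕ} (R : Ω → RRel d) (v : Zd d) :
    MeasurableSpace Ω :=
  ⨅ K : Finset (Zd d), MeasurableSpace.generateFrom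
    {A | ∃ y : Zd d, y ∉ K ∧ A = {ω | R ω (v, y)}}

def rightTail {Ω : Type*} [MeasurableSpace Ω] {d : ℕ} (R : Ω → RRel d) (v : Zd d) :
    MeasurableSpace Ω :=
  ⨅ K : Finset (Zd d), MeasurableSpace.generateFrom
    {A | ∃ y : Zd d, y ∉ K ∧ A = {ω | R ω (y, v)}}

def remoteTail {Ω : Type*} [MeasurableSpace Ω] {d : ℕ} (R : Ω → RRel d) :
    MeasurableSpace Ω :=
  ⨅ (K₁ : Finset (Zd d)) (K₂ : Finset (Zd d)), MeasurableSpace.generateFrom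
    {A | ∃ x y : Zd d, x ∉ K₁ ∧ y ∉ K₂ ∧ A = {ω | R ω (x, y)}}

def TrivialField {Ω : Type*} [MeasurableSpace Ω] (P : Measure Ω)
    (m : MeasurableSpace Ω) : Prop :=
  ∀ A : Set Ω, MeasurableSet[m] A → P A = 0 ∨ P A = 1

def IsSRW {Ω : Type*} [MeasurableSpace Ω] {d : ℕ} (P : Measure Ω) (x : Zd d)
    (X : ℕ → Ω → Zd d) : Prop :=
  ∀ (n : ℕ) (a : ℕ → Zd d),
    (P {ω | ∀ i ≤ n, X i ω = a i}).toReal =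
      if a 0 = x ∧ ∀ i < n, (∑ j, |a (i + 1) j - a i j|) = 1 then (1 / (2 * d) : ℝ) ^ n else 0

/-!
For a list `L = [x₀, …, xₘ]` of distinct points put `ρ(L) = ∏ᵢ ρ(xᵢ, {xᵢ₊₁, …, xₘ})`; repeated
points among the `xᵢ` only contribute factors `1`, so we may deduplicate. Joining each point to a
nearest later point gives a spanning tree of weight exactly `ρ(L)`, whence `spread ≤ ρ(L)`.
Conversely, list the vertices of any spanning tree by decreasing distance to a root: every vertex
but the root then has its parent later in the list, along distinct edges, so this ordering has
`ρ` at most the weight of the tree. Finally, by the triangle inequality an adjacent transposition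
changes `ρ` by a factor at most `2`, so any reordering of `m` points changes it by at most
`2 ^ (m ^ 2)`.
-/

open SimpleGraph

section Weights

variable {d : ℕ}

lemma one_le_br (x y : Zd d) : 1 ≤ br x y :=
  le_add_of_nonneg_right (Finset.sum_nonneg fun _ _ => abs_nonneg _)

lemma br_nonneg (x y : Zd d) : 0 ≤ br x y := zero_le_one.trans (one_le_br x y)

lemma br_self (x : Zd d) : br x x = 1 := by simp [br]

lemma br_triangle (x y z : Zd d) : br x z ≤ br x y + br y z := by
  have h : ∑ i, |(x i : ℝ) - z i| ≤ ∑ i, (|(x i : ℝ) - y i| + |(y i : ℝ) - z i|) :=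
    Finset.sum_le_sum fun i _ => abs_sub_le _ _ _
  rw [Finset.sum_add_distrib] at h
  simp only [br]
  linarith

noncomputable def brE : Sym2 (Zd d) → ℝ := Sym2.lift ⟨br, br_symm⟩

lemma one_le_brE (e : Sym2 (Zd d)) : 1 ≤ brE e := by
  induction e using Sym2.ind with
  | _ x y => exact one_le_br x y

lemma rho_nonneg (V W : Finset (Zd d)) : 0 ≤ rho V W :=
  Real.sInf_nonneg <| by
    rintro p ⟨v, -, w, -, rfl⟩
    exact br_nonneg v w

lemma rho_singleton_eq_inf' (v : Zd d) {W : Finset (Zd d)} (hW : W.Nonempty) :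
    rho {v} W = W.inf' hW (br v) := by
  rw [rho, Finset.inf'_eq_csInf_image]
  congr 1
  ext p
  simp [eq_comm]

lemma rho_le_br {v w : Zd d} {W : Finset (Zd d)} (hw : w ∈ W) : rho {v} W ≤ br v w := by
  rw [rho_singleton_eq_inf' v ⟨w, hw⟩]
  exact Finset.inf'_le _ hw

lemma exists_mem_rho_eq (v : Zd d) {W : Finset (Zd d)} (hW : W.Nonempty) :
    ∃ w ∈ W, rho {v} W = br v w := by
  rw [rho_singleton_eq_inf' v hW]
  exact Finset.exists_mem_eq_inf' hW _

lemma rho_singleton_singleton (v w : Zd d) : rho {v} {w} = br v w := by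
  rw [rho_singleton_eq_inf' v (Finset.singleton_nonempty w), Finset.inf'_singleton]

lemma rho_eq_one_of_mem {v : Zd d} {W : Finset (Zd d)} (hv : v ∈ W) : rho {v} W = 1 := by
  rw [rho_singleton_eq_inf' v ⟨v, hv⟩]
  exact le_antisymm (br_self v ▸ Finset.inf'_le _ hv) (Finset.le_inf' _ _ fun w _ => one_le_br v w)

lemma rho_insert (v a : Zd d) {W : Finset (Zd d)} (hW : W.Nonempty) :
    rho {v} (insert a W) = min (br v a) (rho {v} W) := by
  rw [rho_singleton_eq_inf' v hW, rho_singleton_eq_inf' v (Finset.insert_nonempty a W),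
    Finset.inf'_insert]

lemma rho_le_br_add_rho (a b : Zd d) {W : Finset (Zd d)} (hW : W.Nonempty) :
    rho {b} W ≤ br b a + rho {a} W := by
  obtain ⟨w, hw, h⟩ := exists_mem_rho_eq a hW
  rw [h]
  exact (rho_le_br hw).trans (br_triangle b a w)

lemma min_mul_le_two_mul_min_mul {t α β : ℝ} (ht : 0 ≤ t) (hα : 0 ≤ α) (hβ : 0 ≤ β)
    (hαβ : α ≤ t + β) : min t β * α ≤ 2 * (min t α * β) := by
  rcases le_total t β with hb | hb <;> rcases le_total t α with ha | ha
  · rw [min_eq_left hb, min_eq_left ha]; nlinarith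
  · rw [min_eq_left hb, min_eq_right ha]; nlinarith
  · rw [min_eq_right hb, min_eq_left ha]; nlinarith
  · rw [min_eq_right hb, min_eq_right ha]; nlinarith

lemma rho_insert_mul_rho_le (a b : Zd d) {W : Finset (Zd d)} (hW : W.Nonempty) :
    rho {b} (insert a W) * rho {a} W ≤ 2 * (rho {a} (insert b W) * rho {b} W) := by
  rw [rho_insert b a hW, rho_insert a b hW, br_symm b a]
  exact min_mul_le_two_mul_min_mul (br_nonneg a b) (rho_nonneg _ _) (rho_nonneg _ _)
    (rho_le_br_add_rho b a hW)

end Weights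

section RhoProd

variable {d : ℕ}

/-- `rhoProd [x₀, …, xₘ] = ∏_{i<m} ρ(xᵢ, {xᵢ₊₁, …, xₘ})`. -/
noncomputable def rhoProd : List (Zd d) → ℝ
  | [] => 1
  | [_] => 1
  | a :: b :: l => rho {a} (b :: l).toFinset * rhoProd (b :: l)

lemma rhoProd_cons (a : Zd d) {l : List (Zd d)} (hl : l ≠ []) :
    rhoProd (a :: l) = rho {a} l.toFinset * rhoProd l := by
  cases l with
  | nil => exact absurd rfl hl
  | cons b t => rfl

lemma rhoProd_nonneg : ∀ l : List (Zd d), 0 ≤ rhoProd l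
  | [] | [_] => zero_le_one
  | _ :: b :: l => mul_nonneg (rho_nonneg _ _) (rhoProd_nonneg (b :: l))

lemma rhoProd_dedup : ∀ l : List (Zd d), rhoProd l.dedup = rhoProd l
  | [] => rfl
  | a :: l => by
    by_cases ha : a ∈ l
    · rw [List.dedup_cons_of_mem ha, rhoProd_dedup l, rhoProd_cons a (List.ne_nil_of_mem ha),
        rho_eq_one_of_mem (List.mem_toFinset.2 ha), one_mul]
    rcases eq_or_ne l [] with rfl | hl
    · rfl
    rw [List.dedup_cons_of_notMem ha, rhoProd_cons a (mt (List.dedup_eq_nil l).1 hl),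
      rhoProd_cons a hl, rhoProd_dedup l]
    congr 2
    ext
    simp

lemma rhoProd_swap (a b : Zd d) (l : List (Zd d)) :
    rhoProd (b :: a :: l) ≤ 2 * rhoProd (a :: b :: l) := by
  rcases eq_or_ne l [] with rfl | hl
  · simp only [rhoProd, List.toFinset_cons, List.toFinset_nil, insert_empty_eq,
      rho_singleton_singleton, br_symm b a, mul_one]
    linarith [br_nonneg a b]
  have hW : l.toFinset.Nonempty := List.toFinset_nonempty_iff l |>.2 hl
  simp only [rhoProd_cons _ (List.cons_ne_nil _ _), rhoProd_cons _ hl, List.toFinset_cons,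
    ← mul_assoc]
  linarith [mul_le_mul_of_nonneg_right (rho_insert_mul_rho_le a b hW) (rhoProd_nonneg l)]

lemma rhoProd_le_cons_erase {a : Zd d} : ∀ {l : List (Zd d)}, a ∈ l →
    rhoProd l ≤ 2 ^ l.length * rhoProd (a :: l.erase a)
  | [], h => absurd h List.not_mem_nil
  | b :: l, h => by
    rcases eq_or_ne b a with rfl | hba
    · rw [List.erase_cons_head]
      exact le_mul_of_one_le_left (rhoProd_nonneg _) (one_le_pow₀ one_le_two)
    have ha : a ∈ l := (List.mem_cons.1 h).resolve_left hba.symm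
    have hl : l ≠ [] := List.ne_nil_of_mem ha
    have hfin : (a :: l.erase a).toFinset = l.toFinset :=
      List.toFinset_eq_of_perm _ _ (List.perm_cons_erase ha).symm
    calc rhoProd (b :: l) = rho {b} l.toFinset * rhoProd l := rhoProd_cons b hl
      _ ≤ rho {b} l.toFinset * (2 ^ l.length * rhoProd (a :: l.erase a)) :=
          mul_le_mul_of_nonneg_left (rhoProd_le_cons_erase ha) (rho_nonneg _ _)
      _ = 2 ^ l.length * rhoProd (b :: a :: l.erase a) := by
          rw [rhoProd_cons b (List.cons_ne_nil _ _), hfin]; ring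
      _ ≤ 2 ^ l.length * (2 * rhoProd (a :: b :: l.erase a)) := by
          gcongr; exact rhoProd_swap a b _
      _ = 2 ^ (b :: l).length * rhoProd (a :: (b :: l).erase a) := by
          rw [List.erase_cons_tail (by simpa using hba), List.length_cons, pow_succ]; ring

lemma rhoProd_le_of_perm : ∀ {l₁ l₂ : List (Zd d)}, l₁.Perm l₂ →
    rhoProd l₁ ≤ 2 ^ (l₁.length ^ 2) * rhoProd l₂
  | _, [], h => by simp [h.eq_nil]
  | l₁, a :: l₂, h => by
    have ha : a ∈ l₁ := h.symm.subset List.mem_cons_self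
    have hperm : (l₁.erase a).Perm l₂ := ((List.perm_cons_erase ha).symm.trans h).cons_inv
    have hlen : l₁.length = (l₁.erase a).length + 1 := (List.length_erase_add_one ha).symm
    set m := (l₁.erase a).length
    have hcons : rhoProd (a :: l₁.erase a) ≤ 2 ^ (m ^ 2) * rhoProd (a :: l₂) := by
      rcases eq_or_ne l₂ [] with rfl | hl₂
      · simpa [hperm.eq_nil, rhoProd] using one_le_pow₀ one_le_two
      have hl₁ : l₁.erase a ≠ [] := fun h' => hl₂ (h' ▸ hperm).symm.eq_nil
      rw [rhoProd_cons a hl₁, rhoProd_cons a hl₂, List.toFinset_eq_of_perm _ _ hperm,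
        mul_left_comm]
      exact mul_le_mul_of_nonneg_left (rhoProd_le_of_perm hperm) (rho_nonneg _ _)
    calc rhoProd l₁ ≤ 2 ^ l₁.length * rhoProd (a :: l₁.erase a) := rhoProd_le_cons_erase ha
      _ ≤ 2 ^ (m + 1) * (2 ^ (m ^ 2) * rhoProd (a :: l₂)) := by rw [hlen]; gcongr
      _ ≤ 2 ^ (l₁.length ^ 2) * rhoProd (a :: l₂) := by
          rw [← mul_assoc, ← pow_add, hlen]
          gcongr
          · exact rhoProd_nonneg _
          · exact one_le_two
          · nlinarith

end RhoProd

lemma image_Icc_add_one {α : Type*} [DecidableEq α] (x : ℕ → α) (a b : ℕ) :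
    (Finset.Icc (a + 1) (b + 1)).image x = (Finset.Icc a b).image (fun i => x (i + 1)) := by
  rw [← Finset.image_add_right_Icc, Finset.image_image]
  rfl

lemma rhoProd_map_range {d : ℕ} (x : ℕ → Zd d) (n : ℕ) :
    rhoProd ((List.range n).map x)
      = ∏ i ∈ Finset.range (n - 1), rho {x i} ((Finset.Icc (i + 1) (n - 1)).image x) := by
  induction n generalizing x with
  | zero => rfl
  | succ n ih =>
    rcases n with _ | k
    · rfl
    have hfin : ((List.range (k + 1)).map (fun i => x (i + 1))).toFinset
        = (Finset.Icc 1 (k + 1)).image x := by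
      rw [image_Icc_add_one, ← Nat.range_succ_eq_Icc_zero]
      ext
      simp
    rw [List.range_succ_eq_map, List.map_cons, List.map_map, rhoProd_cons _ (by simp)]
    simp only [Nat.add_sub_cancel] at ih ⊢
    rw [Finset.prod_range_succ', mul_comm]
    simp only [Function.comp_def, Nat.succ_eq_add_one, hfin, ih, image_Icc_add_one]

section InducedTree

variable {V : Type*}

lemma SimpleGraph.Reachable.induce_of_adj_mem {G : SimpleGraph V} {s : Set V}
    (hs : ∀ u v, G.Adj u v → u ∈ s) {u v : V} (hu : u ∈ s) (hv : v ∈ s) (h : G.Reachable u v) :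
    (G.induce s).Reachable ⟨u, hu⟩ ⟨v, hv⟩ := by
  obtain ⟨p⟩ := h
  have hsupp : ∀ {a b : V} (q : G.Walk a b), a ∈ s → ∀ x ∈ q.support, x ∈ s := by
    intro a b q
    induction q with
    | nil => simp
    | cons hadj q ih =>
      intro ha x hx
      rcases List.mem_cons.1 hx with rfl | hx
      · exact ha
      · exact ih (hs _ _ hadj.symm) x hx
  exact ⟨p.induce s (hsupp p hu)⟩

variable [DecidableEq V]

def restrictEdges (W : Finset V) (T : Finset (Sym2 V)) : Finset (Sym2 W) :=
  Finset.univ.filter fun e => e.map Subtype.val ∈ T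

lemma mem_restrictEdges {W : Finset V} {T : Finset (Sym2 V)} {e : Sym2 W} :
    e ∈ restrictEdges W T ↔ e.map Subtype.val ∈ T := by
  simp [restrictEdges]

lemma fromEdgeSet_restrictEdges (W : Finset V) (T : Finset (Sym2 V)) :
    fromEdgeSet (restrictEdges W T : Set (Sym2 W))
      = (fromEdgeSet (T : Set (Sym2 V))).induce (W : Set V) := by
  ext u v
  rw [fromEdgeSet_adj, induce_adj, fromEdgeSet_adj, Finset.mem_coe, mem_restrictEdges,
    Sym2.map_mk, Finset.mem_coe, ne_eq, Subtype.ext_iff]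

lemma isTree_fromEdgeSet_restrictEdges {W : Finset V} (hW : W.Nonempty) {T : Finset (Sym2 V)}
    (hT : ∀ e ∈ T, ∀ z ∈ e, z ∈ W) (hacy : (fromEdgeSet (T : Set (Sym2 V))).IsAcyclic)
    (hconn : ∀ z ∈ W, ∀ w ∈ W, (fromEdgeSet (T : Set (Sym2 V))).Reachable z w) :
    (fromEdgeSet (restrictEdges W T : Set (Sym2 W))).IsTree := by
  rw [fromEdgeSet_restrictEdges]
  have hs : ∀ u v, (fromEdgeSet (T : Set (Sym2 V))).Adj u v → u ∈ (W : Set V) := fun u v h =>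
    hT _ ((fromEdgeSet_adj _).1 h).1 u (Sym2.mem_mk_left u v)
  refine ⟨(connected_iff _).2 ⟨?_, hW.to_set.coe_sort⟩, hacy.induce _⟩
  rintro ⟨u, hu⟩ ⟨v, hv⟩
  exact (hconn u hu v hv).induce_of_adj_mem hs hu hv

lemma image_restrictEdges {W : Finset V} {T : Finset (Sym2 V)} (hT : ∀ e ∈ T, ∀ z ∈ e, z ∈ W) :
    (restrictEdges W T).image (Sym2.map Subtype.val) = T := by
  refine Finset.Subset.antisymm (fun e he => ?_) fun e he => ?_
  · obtain ⟨e', he', rfl⟩ := Finset.mem_image.1 he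
    exact mem_restrictEdges.1 he'
  induction e using Sym2.ind with
  | _ x y =>
    refine Finset.mem_image.2
      ⟨s(⟨x, hT _ he x (Sym2.mem_mk_left x y)⟩, ⟨y, hT _ he y (Sym2.mem_mk_right x y)⟩), ?_, rfl⟩
    exact mem_restrictEdges.2 he

end InducedTree

section Spread

variable {d : ℕ}

lemma prod_lift_br_eq_prod_brE {W : Finset (Zd d)} (E : Finset (Sym2 {x // x ∈ W})) :
    ∏ e ∈ E, Sym2.lift ⟨fun u v => br u.1 v.1, fun u v => br_symm u.1 v.1⟩ e
      = ∏ e ∈ E.image (Sym2.map Subtype.val), brE e := by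
  rw [Finset.prod_image fun e₁ _ e₂ _ h => Sym2.map.injective Subtype.val_injective h]
  refine Finset.prod_congr rfl fun e _ => ?_
  induction e using Sym2.ind with
  | _ u v => rfl

lemma spread_le_prod {W : Finset (Zd d)} {E : Finset (Sym2 {x // x ∈ W})}
    (htree : (fromEdgeSet (E : Set (Sym2 {x // x ∈ W}))).IsTree) (hdiag : ∀ e ∈ E, ¬ e.IsDiag) :
    spread W ≤ ∏ e ∈ E.image (Sym2.map Subtype.val), brE e := by
  refine csInf_le ⟨0, ?_⟩ ⟨E, htree, hdiag, (prod_lift_br_eq_prod_brE E).symm⟩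
  rintro p ⟨E', -, -, rfl⟩
  rw [prod_lift_br_eq_prod_brE]
  exact Finset.prod_nonneg fun e _ => zero_le_one.trans (one_le_brE e)

lemma le_spread {W : Finset (Zd d)} {c : ℝ}
    (hne : ∃ E : Finset (Sym2 {x // x ∈ W}),
      (fromEdgeSet (E : Set (Sym2 {x // x ∈ W}))).IsTree ∧ ∀ e ∈ E, ¬ e.IsDiag)
    (h : ∀ E : Finset (Sym2 {x // x ∈ W}), (fromEdgeSet (E : Set (Sym2 {x // x ∈ W}))).IsTree →
      c ≤ ∏ e ∈ E.image (Sym2.map Subtype.val), brE e) :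
    c ≤ spread W := by
  obtain ⟨E, htree, hdiag⟩ := hne
  refine le_csInf ⟨_, E, htree, hdiag, rfl⟩ ?_
  rintro p ⟨E', htree', -, rfl⟩
  rw [prod_lift_br_eq_prod_brE]
  exact h E' htree'

lemma exists_acyclic_prod_brE_eq_rhoProd : ∀ {L : List (Zd d)}, L.Nodup → L ≠ [] →
    ∃ T : Finset (Sym2 (Zd d)), (∀ e ∈ T, ∀ z ∈ e, z ∈ L) ∧ (∀ e ∈ T, ¬ e.IsDiag) ∧
      (fromEdgeSet (T : Set (Sym2 (Zd d)))).IsAcyclic ∧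
      (∀ z ∈ L, ∀ w ∈ L, (fromEdgeSet (T : Set (Sym2 (Zd d)))).Reachable z w) ∧
      ∏ e ∈ T, brE e = rhoProd L
  | [], _, h => absurd rfl h
  | [a], _, _ => ⟨∅, by simp, by simp, by simp, by simp, rfl⟩
  | a :: b :: l, hnd, _ => by
    obtain ⟨T, hT, hdiag, hacy, hconn, hprod⟩ :=
      exists_acyclic_prod_brE_eq_rhoProd hnd.of_cons (List.cons_ne_nil b l)
    have ha : a ∉ b :: l := (List.nodup_cons.1 hnd).1
    obtain ⟨w, hw, hρ⟩ := exists_mem_rho_eq a (W := (b :: l).toFinset) ⟨b, by simp⟩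
    rw [List.mem_toFinset] at hw
    have haw : a ≠ w := fun h => ha (h ▸ hw)
    have hnotin : s(a, w) ∉ T := fun h => ha (hT _ h a (Sym2.mem_mk_left a w))
    set G := fromEdgeSet (T : Set (Sym2 (Zd d)))
    have hnreach : ¬ G.Reachable a w := by
      rintro ⟨_ | ⟨hadj, _⟩⟩
      · exact haw rfl
      · exact ha (hT _ ((fromEdgeSet_adj _).1 hadj).1 a (Sym2.mem_mk_left _ _))
    have hgraph : fromEdgeSet ↑(insert s(a, w) T) = G ⊔ edge a w := by
      rw [Finset.coe_insert, Set.insert_eq, fromEdgeSet_union, sup_comm]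
      rfl
    have hle : G ≤ G ⊔ edge a w := le_sup_left
    have hadj : (G ⊔ edge a w).Adj a w := Or.inr (by simp [edge_adj, haw])
    have hreach_a : ∀ z ∈ b :: l, (G ⊔ edge a w).Reachable a z := fun z hz =>
      hadj.reachable.trans ((hconn w hw z hz).mono hle)
    refine ⟨insert s(a, w) T, ?_, ?_, ?_, ?_, ?_⟩
    · intro e he z hz
      rcases Finset.mem_insert.1 he with rfl | he
      · rcases Sym2.mem_iff.1 hz with rfl | rfl
        · exact List.mem_cons_self
        · exact List.mem_cons_of_mem _ hw
      · exact List.mem_cons_of_mem _ (hT e he z hz)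
    · intro e he
      rcases Finset.mem_insert.1 he with rfl | he
      · exact Sym2.mk_isDiag_iff.not.2 haw
      · exact hdiag e he
    · rw [hgraph]
      exact hacy.sup_edge_of_not_reachable hnreach
    · rw [hgraph]
      intro z hz y hy
      rcases List.mem_cons.1 hz with hza | hzl <;> rcases List.mem_cons.1 hy with hya | hyl
      · rw [hza, hya]
      · exact hza ▸ hreach_a y hyl
      · exact hya ▸ (hreach_a z hzl).symm
      · exact (hconn z hzl y hyl).mono hle
    · rw [Finset.prod_insert hnotin, hprod, rhoProd_cons a (List.cons_ne_nil b l), hρ]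
      rfl

lemma exists_isTree_prod_brE_eq_rhoProd {L : List (Zd d)} (hL : L.Nodup) (hne : L ≠ []) :
    ∃ E : Finset (Sym2 {x // x ∈ L.toFinset}),
      (fromEdgeSet (E : Set (Sym2 {x // x ∈ L.toFinset}))).IsTree ∧ (∀ e ∈ E, ¬ e.IsDiag) ∧
      ∏ e ∈ E.image (Sym2.map Subtype.val), brE e = rhoProd L := by
  obtain ⟨T, hT, hdiag, hacy, hconn, hprod⟩ := exists_acyclic_prod_brE_eq_rhoProd hL hne
  simp only [← List.mem_toFinset] at hT hconn
  refine ⟨restrictEdges L.toFinset T,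
    isTree_fromEdgeSet_restrictEdges (List.toFinset_nonempty_iff L |>.2 hne) hT hacy hconn,
    fun e he => ?_, by rw [image_restrictEdges hT, hprod]⟩
  have := hdiag _ (mem_restrictEdges.1 he)
  rwa [Sym2.isDiag_map Subtype.val_injective] at this

lemma spread_le_rhoProd {L : List (Zd d)} (hL : L.Nodup) (hne : L ≠ []) :
    spread L.toFinset ≤ rhoProd L := by
  obtain ⟨E, htree, hdiag, hprod⟩ := exists_isTree_prod_brE_eq_rhoProd hL hne
  exact hprod ▸ spread_le_prod htree hdiag

end Spread

section LaterNeighbors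

variable {α β : Type*}

def HasLaterNeighbors (r : α → α → Prop) : List α → Prop
  | [] => True
  | [_] => True
  | a :: b :: l => (∃ w ∈ b :: l, r a w) ∧ HasLaterNeighbors r (b :: l)

lemma HasLaterNeighbors.imp_of_mem {r s : α → α → Prop} :
    ∀ {l : List α}, (∀ a ∈ l, ∀ b ∈ l, r a b → s a b) →
      HasLaterNeighbors r l → HasLaterNeighbors s l
  | [], _, _ | [_], _, _ => trivial
  | a :: _ :: _, h, ⟨⟨w, hw, hr⟩, hrest⟩ =>
    ⟨⟨w, hw, h a List.mem_cons_self w (List.mem_cons_of_mem _ hw) hr⟩,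
      hrest.imp_of_mem fun x hx y hy =>
        h x (List.mem_cons_of_mem _ hx) y (List.mem_cons_of_mem _ hy)⟩

lemma HasLaterNeighbors.map {r : α → α → Prop} {s : β → β → Prop} (f : α → β)
    (h : ∀ a b, r a b → s (f a) (f b)) :
    ∀ {l : List α}, HasLaterNeighbors r l → HasLaterNeighbors s (l.map f)
  | [], _ | [_], _ => trivial
  | a :: _ :: _, ⟨⟨w, hw, hr⟩, hrest⟩ =>
    ⟨⟨f w, List.mem_map_of_mem hw, h a w hr⟩, hrest.map f h⟩

lemma hasLaterNeighbors_of_pairwise {r : α → α → Prop} (f : α → ℕ) :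
    ∀ {l : List α}, l.Nodup → l.Pairwise (fun a b => f b ≤ f a) →
      (∀ a ∈ l, ∀ b ∈ l, a ≠ b → f b ≤ f a → ∃ w ∈ l, r a w ∧ f w < f a) →
      HasLaterNeighbors r l
  | [], _, _, _ | [_], _, _, _ => trivial
  | a :: b :: l, hnd, hsort, hdesc => by
    have ha : a ∉ b :: l := (List.nodup_cons.1 hnd).1
    have hfirst : ∀ c ∈ b :: l, f c ≤ f a := (List.pairwise_cons.1 hsort).1
    refine ⟨?_, hasLaterNeighbors_of_pairwise f hnd.of_cons (List.pairwise_cons.1 hsort).2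
      fun c hc c' hc' hcc' hle => ?_⟩
    · obtain ⟨w, hw, hr, hlt⟩ := hdesc a List.mem_cons_self b (List.mem_cons_of_mem _
        List.mem_cons_self) (fun h => ha (h ▸ List.mem_cons_self)) (hfirst b List.mem_cons_self)
      refine ⟨w, (List.mem_cons.1 hw).resolve_left ?_, hr⟩
      rintro rfl
      exact lt_irrefl _ hlt
    · obtain ⟨w, hw, hr, hlt⟩ := hdesc c (List.mem_cons_of_mem _ hc) c'
        (List.mem_cons_of_mem _ hc') hcc' hle
      refine ⟨w, (List.mem_cons.1 hw).resolve_left ?_, hr, hlt⟩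
      rintro rfl
      exact absurd (hfirst c hc) (not_le.2 hlt)

end LaterNeighbors

section ConnectedOrder

variable {V : Type*} {G : SimpleGraph V}

lemma SimpleGraph.Connected.exists_adj_dist_lt (hG : G.Connected) {v r : V} (h : v ≠ r) :
    ∃ w, G.Adj v w ∧ G.dist w r < G.dist v r := by
  obtain ⟨p, hp⟩ := hG.exists_walk_length_eq_dist v r
  cases p with
  | nil => exact absurd rfl h
  | cons hadj q =>
    refine ⟨_, hadj, ?_⟩
    have := dist_le q
    rw [Walk.length_cons] at hp
    omega

lemma SimpleGraph.Connected.exists_list_hasLaterNeighbors [Fintype V] (hG : G.Connected) :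
    ∃ Z : List V, Z.Nodup ∧ (∀ v, v ∈ Z) ∧ HasLaterNeighbors G.Adj Z := by
  obtain ⟨r⟩ := hG.nonempty
  set Z := Finset.univ.toList.mergeSort fun a b => decide (G.dist b r ≤ G.dist a r)
  have hperm : Z.Perm Finset.univ.toList := List.mergeSort_perm _ _
  have hmem : ∀ v, v ∈ Z := fun v => hperm.mem_iff.2 (Finset.mem_toList.2 (Finset.mem_univ v))
  have hnd : Z.Nodup := hperm.nodup_iff.2 (Finset.nodup_toList _)
  refine ⟨Z, hnd, hmem, hasLaterNeighbors_of_pairwise (fun v => G.dist v r) hnd ?_ ?_⟩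
  · have := List.pairwise_mergeSort (le := fun a b => decide (G.dist b r ≤ G.dist a r))
      (fun a b c => by simp only [decide_eq_true_eq]; omega)
      (fun a b => by simp only [Bool.or_eq_true, decide_eq_true_eq]; omega) Finset.univ.toList
    simpa only [decide_eq_true_eq] using this
  · intro a _ b _ hab hle
    have har : a ≠ r := by
      rintro rfl
      rw [dist_self, Nat.le_zero, hG.dist_eq_zero_iff] at hle
      exact hab hle.symm
    obtain ⟨w, hadj, hlt⟩ := hG.exists_adj_dist_lt har
    exact ⟨w, hmem w, hadj, hlt⟩

end ConnectedOrder

section LowerBound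

variable {d : ℕ}

lemma rhoProd_le_prod_brE : ∀ {Z : List (Zd d)} {T : Finset (Sym2 (Zd d))}, Z.Nodup →
    HasLaterNeighbors (fun a b => s(a, b) ∈ T) Z → rhoProd Z ≤ ∏ e ∈ T, brE e
  | [], _, _, _ | [_], _, _, _ => Finset.one_le_prod fun e _ => one_le_brE e
  | a :: b :: l, T, hnd, ⟨⟨w, hw, he⟩, hrest⟩ => by
    have ha : a ∉ b :: l := (List.nodup_cons.1 hnd).1
    have hrest' : HasLaterNeighbors (fun x y => s(x, y) ∈ T.erase s(a, w)) (b :: l) := by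
      refine hrest.imp_of_mem fun x hx y hy hxy => Finset.mem_erase.2 ⟨fun h => ?_, hxy⟩
      rcases Sym2.mem_iff.1 (h.symm ▸ Sym2.mem_mk_left a w : a ∈ s(x, y)) with rfl | rfl
      exacts [ha hx, ha hy]
    calc rhoProd (a :: b :: l) = rho {a} (b :: l).toFinset * rhoProd (b :: l) := rfl
      _ ≤ brE s(a, w) * ∏ e ∈ T.erase s(a, w), brE e :=
          mul_le_mul (rho_le_br (List.mem_toFinset.2 hw)) (rhoProd_le_prod_brE hnd.of_cons hrest')
            (rhoProd_nonneg _) (zero_le_one.trans (one_le_brE _))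
      _ = ∏ e ∈ T, brE e := Finset.mul_prod_erase T brE he

lemma rhoProd_le_mul_prod_of_connected {L : List (Zd d)} (hL : L.Nodup)
    {E : Finset (Sym2 {x // x ∈ L.toFinset})}
    (hE : (fromEdgeSet (E : Set (Sym2 {x // x ∈ L.toFinset}))).Connected) :
    rhoProd L ≤ 2 ^ (L.length ^ 2) * ∏ e ∈ E.image (Sym2.map Subtype.val), brE e := by
  obtain ⟨Z, hZnd, hZmem, hZ⟩ := hE.exists_list_hasLaterNeighbors
  have hperm : L.Perm (Z.map Subtype.val) := by
    refine List.perm_of_nodup_nodup_toFinset_eq hL (hZnd.map Subtype.val_injective) ?_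
    ext x
    simp only [List.mem_toFinset, List.mem_map]
    exact ⟨fun hx => ⟨⟨x, List.mem_toFinset.2 hx⟩, hZmem _, rfl⟩,
      fun ⟨z, _, hz⟩ => hz ▸ List.mem_toFinset.1 z.2⟩
  have hZ' : HasLaterNeighbors (fun a b => s(a, b) ∈ E.image (Sym2.map Subtype.val))
      (Z.map Subtype.val) :=
    hZ.map _ fun u v h => Finset.mem_image.2 ⟨s(u, v), ((fromEdgeSet_adj _).1 h).1, rfl⟩
  calc rhoProd L ≤ 2 ^ (L.length ^ 2) * rhoProd (Z.map Subtype.val) := rhoProd_le_of_perm hperm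
    _ ≤ 2 ^ (L.length ^ 2) * ∏ e ∈ E.image (Sym2.map Subtype.val), brE e := by
        gcongr
        exact rhoProd_le_prod_brE (hZnd.map Subtype.val_injective) hZ'

lemma inv_mul_rhoProd_le_spread {L : List (Zd d)} (hL : L.Nodup) (hne : L ≠ []) :
    (2 ^ (L.length ^ 2))⁻¹ * rhoProd L ≤ spread L.toFinset := by
  obtain ⟨E, htree, hdiag, -⟩ := exists_isTree_prod_brE_eq_rhoProd hL hne
  refine le_spread ⟨E, htree, hdiag⟩ fun E' htree' => ?_
  rw [inv_mul_le_iff₀ (by positivity)]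
  exact rhoProd_le_mul_prod_of_connected hL htree'.connected

end LowerBound

theorem statement2 {d : ℕ} (n : ℕ) (hn : 2 ≤ n) :
    ∃ c C : ℝ, 0 < c ∧ 0 < C ∧ ∀ x : ℕ → Zd d,
      c * ∏ i ∈ Finset.range (n - 1), rho {x i} ((Finset.Icc (i + 1) (n - 1)).image x)
          ≤ spread ((Finset.range n).image x) ∧
      spread ((Finset.range n).image x)
          ≤ C * ∏ i ∈ Finset.range (n - 1), rho {x i} ((Finset.Icc (i + 1) (n - 1)).image x) := by
  refine ⟨(2 ^ (n ^ 2))⁻¹, 1, by positivity, one_pos, fun x => ?_⟩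
  set L := ((List.range n).map x).dedup
  have hL : L.Nodup := List.nodup_dedup _
  have hne : L ≠ [] := by
    simp only [L, ne_eq, List.dedup_eq_nil, List.map_eq_nil_iff, List.range_eq_nil]; omega
  have hlen : L.length ≤ n := by simpa using (List.dedup_sublist ((List.range n).map x)).length_le
  have hW : L.toFinset = (Finset.range n).image x := by ext; simp [L]
  rw [← hW, ← rhoProd_map_range, ← rhoProd_dedup, one_mul]
  refine ⟨le_trans ?_ (inv_mul_rhoProd_le_spread hL hne), spread_le_rhoProd hL hne⟩
  gcongr
  · exact rhoProd_nonneg L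
  · exact one_le_two
end

section
/- Let α, β ∈ [0,d) with α+β > d and set γ := α+β−d. Then there exist constants c,C > 0 such that for all v,w ∈ Z^d, c·⟨vw⟩^{−γ} ≤ Σ_{x∈Z^d} ⟨vx⟩^{−α}·⟨xw⟩^{−β} ≤ C·⟨vw⟩^{−γ}. -/
open MeasureTheory ProbabilityTheory Finset

set_option maxHeartbeats 1000000

/-!
Write `r = ⟨vw⟩`. Since `⟨vx⟩ + ⟨xw⟩ > r`, wherever `⟨vx⟩ ≤ ⟨xw⟩` we have
`⟨xw⟩ ≥ max ⟨vx⟩ (r / 2)`, so the sum is dominated by `∑ₓ ⟨vx⟩^(-α) · (max ⟨vx⟩ (r / 2))^(-β)`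
plus the symmetric term. Splitting at `⟨vx⟩ ≈ r / 2`, this is `r^(-β)` times a ball sum
`∑_{⟨vx⟩ ≤ r/2} ⟨vx⟩^(-α) ≲ r^(d-α)` (as `α < d`) plus a tail sum
`∑_{⟨vx⟩ ≥ r/2} ⟨vx⟩^(-(α+β)) ≲ r^(d-α-β)` (as `α + β > d`). Both are handled by cutting `ℤ^d`
into the dyadic shells `2^k ≤ ⟨vx⟩ < 2^(k+1)`, each of at most `8^d · 2^(kd)` points, which
turns them into geometric series dominated by their extreme term.

For the lower bound, the `≥ (r / d)^d` points of the box of radius `r / d` around `v` all have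
`⟨vx⟩ ≤ 2r` and `⟨xw⟩ ≤ 3r`.
-/

open scoped ENNReal

namespace LatticeConvolution

variable {d : ℕ}

def natBr (u x : Zd d) : ℕ := 1 + ∑ i, (x i - u i).natAbs

lemma natBr_pos (u x : Zd d) : 0 < natBr u x := Nat.le_add_right _ _

lemma natBr_comm (u x : Zd d) : natBr u x = natBr x u := by
  simp only [natBr, ← Int.natAbs_neg (x _ - u _), neg_sub]

lemma natBr_add_one_le (u v x : Zd d) : natBr u v + 1 ≤ natBr u x + natBr x v := by
  have h : ∑ i, (v i - u i).natAbs ≤ ∑ i, ((x i - u i).natAbs + (v i - x i).natAbs) :=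
    Finset.sum_le_sum fun i _ => by
      simpa only [sub_add_sub_cancel'] using Int.natAbs_add_le (x i - u i) (v i - x i)
  rw [Finset.sum_add_distrib] at h
  unfold natBr
  omega

lemma br_eq_natBr (u x : Zd d) : br u x = natBr u x := by
  simp [br, natBr, Nat.cast_natAbs, abs_sub_comm]

noncomputable def box (u : Zd d) (m : ℕ) : Finset (Zd d) :=
  Fintype.piFinset fun i => Finset.Icc (u i - m) (u i + m)

lemma mem_box {u x : Zd d} {m : ℕ} : x ∈ box u m ↔ ∀ i, (x i - u i).natAbs ≤ m := by
  simp only [box, Fintype.mem_piFinset, Finset.mem_Icc]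
  exact forall_congr' fun i => by omega

lemma card_box (u : Zd d) (m : ℕ) : #(box u m) = (2 * m + 1) ^ d := by
  have h : ∀ i, (u i + m + 1 - (u i - m)).toNat = 2 * m + 1 := fun i => by omega
  simp [box, Fintype.card_piFinset, Int.card_Icc, h]

lemma mem_box_of_natBr_le {u x : Zd d} {m : ℕ} (h : natBr u x ≤ m + 1) : x ∈ box u m :=
  mem_box.2 fun i => by
    have := Finset.single_le_sum (fun j _ => Nat.zero_le ((x j - u j).natAbs)) (Finset.mem_univ i)
    unfold natBr at h
    omega

lemma natBr_le_of_mem_box {u x : Zd d} {m : ℕ} (h : x ∈ box u m) : natBr u x ≤ 1 + d * m := by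
  have := Finset.sum_le_sum fun i (_ : i ∈ Finset.univ) => mem_box.1 h i
  simp only [Finset.sum_const, Finset.card_univ, Fintype.card_fin, smul_eq_mul] at this
  unfold natBr
  omega

lemma card_box_two_pow_le (u : Zd d) (k : ℕ) : #(box u (2 ^ (k + 1))) ≤ (2 ^ (k + 3)) ^ d := by
  rw [card_box]
  have h : 2 ^ (k + 3) = 4 * 2 ^ (k + 1) := by ring
  refine Nat.pow_le_pow_left ?_ d
  have := Nat.one_le_two_pow (n := k + 1)
  omega

theorem tsum_le_tsum_dyadic (u : Zd d) (f : Zd d → ℝ≥0∞) (M : ℕ → ℝ≥0∞)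
    (hf : ∀ x, f x ≤ M (Nat.log 2 (natBr u x))) :
    ∑' x, f x ≤ ∑' k, (2 ^ (k + 3)) ^ d * M k := by
  rw [← (Equiv.sigmaFiberEquiv fun x => Nat.log 2 (natBr u x)).tsum_eq, ENNReal.tsum_sigma']
  refine ENNReal.tsum_le_tsum fun k => ?_
  let toBox : {x // Nat.log 2 (natBr u x) = k} → box u (2 ^ (k + 1)) := fun x =>
    ⟨x.1, mem_box_of_natBr_le <| by
      have := Nat.lt_pow_succ_log_self one_lt_two (natBr u x.1)
      rw [x.2] at this
      omega⟩
  have htoBox : Function.Injective toBox := fun x y h => Subtype.ext (congrArg Subtype.val h :)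
  calc ∑' x : {x // Nat.log 2 (natBr u x) = k}, f (Equiv.sigmaFiberEquiv _ ⟨k, x⟩)
      ≤ ∑' x, (fun _ : box u (2 ^ (k + 1)) => M k) (toBox x) :=
        ENNReal.tsum_le_tsum fun x => (hf x.1).trans_eq (congrArg M x.2)
    _ ≤ ∑' _ : box u (2 ^ (k + 1)), M k := ENNReal.tsum_comp_le_tsum_of_injective htoBox _
    _ = #(box u (2 ^ (k + 1))) * M k := by
        rw [Finset.tsum_subtype (box u _) fun _ => M k, Finset.sum_const, nsmul_eq_mul]
    _ ≤ (2 ^ (k + 3)) ^ d * M k := by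
        gcongr
        exact_mod_cast card_box_two_pow_le u k

lemma summable_and_tsum_le_of_tsum_ofReal_le {ι : Type*} {f : ι → ℝ} {B : ℝ}
    (hf : ∀ i, 0 ≤ f i) (hB : 0 ≤ B) (h : ∑' i, ENNReal.ofReal (f i) ≤ ENNReal.ofReal B) :
    Summable f ∧ ∑' i, f i ≤ B := by
  have hsum : Summable f :=
    (ENNReal.summable_toReal (ne_top_of_le_ne_top ENNReal.ofReal_ne_top h)).congr
      fun i => ENNReal.toReal_ofReal (hf i)
  refine ⟨hsum, ?_⟩
  rwa [← ENNReal.ofReal_le_ofReal_iff hB, ENNReal.ofReal_tsum_of_nonneg hf hsum]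

lemma rpow_neg_le_two_pow_log_rpow_neg {N : ℕ} (hN : N ≠ 0) {t : ℝ} (ht : 0 ≤ t) :
    (N : ℝ) ^ (-t) ≤ ((2 : ℝ) ^ Nat.log 2 N) ^ (-t) :=
  Real.rpow_le_rpow_of_nonpos (by positivity) (by exact_mod_cast Nat.pow_log_le_self 2 hN)
    (neg_nonpos.2 ht)

theorem summable_and_tsum_ite_rpow_le_of_dyadic (u : Zd d) {p P : ℕ → Prop} [DecidablePred p]
    [DecidablePred P] (hpP : ∀ N, p N → P (Nat.log 2 N)) {t B : ℝ} (ht : 0 ≤ t)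
    (hB : HasSum (fun k => ((2 : ℝ) ^ (k + 3)) ^ d * if P k then ((2 : ℝ) ^ k) ^ (-t) else 0) B) :
    Summable (fun x => if p (natBr u x) then (natBr u x : ℝ) ^ (-t) else 0) ∧
      ∑' x, (if p (natBr u x) then (natBr u x : ℝ) ^ (-t) else 0) ≤ B := by
  have hM0 : ∀ k, (0 : ℝ) ≤ ((2 : ℝ) ^ (k + 3)) ^ d * if P k then ((2 : ℝ) ^ k) ^ (-t) else 0 :=
    fun k => by positivity
  refine summable_and_tsum_le_of_tsum_ofReal_le (fun x => by positivity) (hB.nonneg hM0) ?_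
  calc ∑' x, ENNReal.ofReal (if p (natBr u x) then (natBr u x : ℝ) ^ (-t) else 0)
      ≤ ∑' k, (2 ^ (k + 3)) ^ d *
          ENNReal.ofReal (if P k then ((2 : ℝ) ^ k) ^ (-t) else 0) := by
        refine tsum_le_tsum_dyadic u _ _ fun x => ENNReal.ofReal_le_ofReal ?_
        split_ifs with hp hP
        · exact rpow_neg_le_two_pow_log_rpow_neg (natBr_pos u x).ne' ht
        · exact absurd (hpP _ hp) hP
        · positivity
        · exact le_rfl
    _ = ENNReal.ofReal B := by
        rw [← hB.tsum_eq, ENNReal.ofReal_tsum_of_nonneg hM0 hB.summable]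
        congr 1 with k
        rw [ENNReal.ofReal_mul (by positivity), ENNReal.ofReal_pow (by positivity),
          ENNReal.ofReal_pow zero_le_two, ENNReal.ofReal_ofNat]

lemma two_pow_rpow_comm (k : ℕ) (t : ℝ) : ((2 : ℝ) ^ k) ^ t = ((2 : ℝ) ^ t) ^ k := by
  rw [← Real.rpow_natCast_mul zero_le_two, mul_comm, Real.rpow_mul_natCast zero_le_two]

lemma two_pow_add_three_pow_mul_rpow_neg (k : ℕ) (t : ℝ) :
    ((2 : ℝ) ^ (k + 3)) ^ d * ((2 : ℝ) ^ k) ^ (-t) = 8 ^ d * ((2 : ℝ) ^ ((d : ℝ) - t)) ^ k := by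
  rw [pow_add, mul_pow, mul_comm, ← mul_assoc, ← Real.rpow_natCast ((2 : ℝ) ^ k),
    ← Real.rpow_add (by positivity), ← sub_eq_neg_add, two_pow_rpow_comm]
  norm_num [mul_comm]

lemma rpow_neg_le_two_rpow_mul_rpow_neg {x y γ : ℝ} (hy : 0 < y) (hxy : y ≤ 2 * x) (hγ : 0 ≤ γ) :
    x ^ (-γ) ≤ 2 ^ γ * y ^ (-γ) :=
  calc x ^ (-γ) ≤ (y / 2) ^ (-γ) :=
        Real.rpow_le_rpow_of_nonpos (by positivity) (by linarith) (neg_nonpos.2 hγ)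
    _ = 2 ^ γ * y ^ (-γ) := by
        rw [Real.div_rpow hy.le zero_le_two, Real.rpow_neg zero_le_two, div_inv_eq_mul, mul_comm]

lemma hasSum_ite_le_geometric {q : ℝ} (hq : q ≠ 1) (K : ℕ) :
    HasSum (fun k => if k ≤ K then q ^ k else 0) ((q ^ (K + 1) - 1) / (q - 1)) := by
  have h : HasSum (fun k => if k ≤ K then q ^ k else 0)
      (∑ k ∈ Finset.range (K + 1), if k ≤ K then q ^ k else 0) :=
    hasSum_sum_of_ne_finset_zero fun k hk => if_neg (by simpa [Nat.lt_succ_iff] using hk)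
  rwa [Finset.sum_congr rfl fun k hk => if_pos (Nat.lt_succ_iff.1 (Finset.mem_range.1 hk)),
    geom_sum_eq hq] at h

lemma hasSum_ite_ge_geometric {ρ : ℝ} (h0 : 0 ≤ ρ) (h1 : ρ < 1) (K : ℕ) :
    HasSum (fun k => if K ≤ k then ρ ^ k else 0) (ρ ^ K * (1 - ρ)⁻¹) := by
  rw [← hasSum_nat_add_iff' K, Finset.sum_eq_zero fun i hi => if_neg (by simpa using hi),
    sub_zero]
  refine ((hasSum_geometric_of_lt_one h0 h1).mul_left (ρ ^ K)).congr_fun fun n => ?_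
  rw [if_pos (Nat.le_add_left K n), pow_add, mul_comm]

theorem summable_and_tsum_ball_le {e : ℝ} (he : 0 ≤ e) (hed : e < d) :
    ∃ C, 0 < C ∧ ∀ (u : Zd d) (m : ℕ), 1 ≤ m →
      Summable (fun x => if natBr u x ≤ m then (natBr u x : ℝ) ^ (-e) else 0) ∧
      ∑' x, (if natBr u x ≤ m then (natBr u x : ℝ) ^ (-e) else 0) ≤
        C * (m : ℝ) ^ ((d : ℝ) - e) := by
  set q : ℝ := 2 ^ ((d : ℝ) - e)
  have hq : 1 < q := Real.one_lt_rpow one_lt_two (sub_pos.2 hed)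
  refine ⟨8 ^ d * q / (q - 1), by have := sub_pos.2 hq; positivity, fun u m hm => ?_⟩
  set K := Nat.log 2 m
  have hsum : HasSum
      (fun k => ((2 : ℝ) ^ (k + 3)) ^ d * if k ≤ K then ((2 : ℝ) ^ k) ^ (-e) else 0)
      (8 ^ d * ((q ^ (K + 1) - 1) / (q - 1))) :=
    ((hasSum_ite_le_geometric hq.ne' K).mul_left _).congr_fun fun k => by
      split_ifs <;> simp only [two_pow_add_three_pow_mul_rpow_neg, mul_zero, q]
  have hqK : q ^ K ≤ (m : ℝ) ^ ((d : ℝ) - e) := by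
    rw [← two_pow_rpow_comm]
    exact Real.rpow_le_rpow (by positivity) (by exact_mod_cast Nat.pow_log_le_self 2 (by omega))
      (sub_nonneg.2 hed.le)
  refine (summable_and_tsum_ite_rpow_le_of_dyadic u (p := (· ≤ m)) (P := (· ≤ K))
    (fun _ => Nat.log_mono_right) he hsum).imp_right fun h => h.trans ?_
  calc 8 ^ d * ((q ^ (K + 1) - 1) / (q - 1)) ≤ 8 ^ d * (q * q ^ K / (q - 1)) := by
        gcongr
        rw [pow_succ']
        linarith
    _ ≤ 8 ^ d * (q * (m : ℝ) ^ ((d : ℝ) - e) / (q - 1)) := by gcongr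
    _ = 8 ^ d * q / (q - 1) * (m : ℝ) ^ ((d : ℝ) - e) := by ring

theorem summable_and_tsum_tail_le {s : ℝ} (hds : d < s) :
    ∃ C, 0 < C ∧ ∀ (u : Zd d) (m : ℕ), 1 ≤ m →
      Summable (fun x => if m ≤ natBr u x then (natBr u x : ℝ) ^ (-s) else 0) ∧
      ∑' x, (if m ≤ natBr u x then (natBr u x : ℝ) ^ (-s) else 0) ≤
        C * (m : ℝ) ^ (-(s - d)) := by
  set ρ : ℝ := 2 ^ ((d : ℝ) - s)
  have hρ0 : 0 < ρ := by positivity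
  have hρ1 : ρ < 1 := Real.rpow_lt_one_of_one_lt_of_neg one_lt_two (sub_neg.2 hds)
  refine ⟨8 ^ d * 2 ^ (s - d) / (1 - ρ), by have := sub_pos.2 hρ1; positivity, fun u m hm => ?_⟩
  set K := Nat.log 2 m
  have hsum : HasSum
      (fun k => ((2 : ℝ) ^ (k + 3)) ^ d * if K ≤ k then ((2 : ℝ) ^ k) ^ (-s) else 0)
      (8 ^ d * (ρ ^ K * (1 - ρ)⁻¹)) :=
    ((hasSum_ite_ge_geometric hρ0.le hρ1 K).mul_left _).congr_fun fun k => by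
      split_ifs <;> simp only [two_pow_add_three_pow_mul_rpow_neg, mul_zero, ρ]
  have hρK : ρ ^ K ≤ 2 ^ (s - d) * (m : ℝ) ^ (-(s - d)) := by
    rw [← two_pow_rpow_comm, ← neg_sub]
    refine rpow_neg_le_two_rpow_mul_rpow_neg (by positivity) ?_ (sub_nonneg.2 hds.le)
    rw [← pow_succ']
    exact_mod_cast (Nat.lt_pow_succ_log_self one_lt_two m).le
  refine (summable_and_tsum_ite_rpow_le_of_dyadic u (p := (m ≤ ·)) (P := (K ≤ ·))
    (fun _ => Nat.log_mono_right) ((Nat.cast_nonneg d).trans hds.le) hsum).imp_right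
    fun h => h.trans ?_
  calc 8 ^ d * (ρ ^ K * (1 - ρ)⁻¹)
      ≤ 8 ^ d * (2 ^ (s - d) * (m : ℝ) ^ (-(s - d)) * (1 - ρ)⁻¹) := by gcongr
    _ = 8 ^ d * 2 ^ (s - d) / (1 - ρ) * (m : ℝ) ^ (-(s - d)) := by ring

lemma rpow_neg_mul_rpow_neg_le {a b m α β : ℝ} (ha : 0 < a) (hb : 0 < b) (hm : 2 * m ≤ a + b)
    (hα : 0 ≤ α) (hβ : 0 ≤ β) :
    a ^ (-α) * b ^ (-β) ≤ a ^ (-α) * max a m ^ (-β) + b ^ (-β) * max b m ^ (-α) := by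
  rcases le_total a b with hab | hab
  · have : b ^ (-β) ≤ max a m ^ (-β) :=
      Real.rpow_le_rpow_of_nonpos (lt_max_of_lt_left ha) (max_le hab (by linarith)) (by linarith)
    calc a ^ (-α) * b ^ (-β) ≤ a ^ (-α) * max a m ^ (-β) := by gcongr
      _ ≤ _ := le_add_of_nonneg_right (by positivity)
  · have : a ^ (-α) ≤ max b m ^ (-α) :=
      Real.rpow_le_rpow_of_nonpos (lt_max_of_lt_left hb) (max_le hab (by linarith)) (by linarith)
    calc a ^ (-α) * b ^ (-β) ≤ b ^ (-β) * max b m ^ (-α) := by rw [mul_comm]; gcongr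
      _ ≤ _ := le_add_of_nonneg_left (by positivity)

lemma rpow_neg_mul_max_rpow_neg_le {a m α β : ℝ} (ha : 0 < a) (hm : 0 < m) :
    a ^ (-α) * max a m ^ (-β) ≤
      m ^ (-β) * (if a ≤ m then a ^ (-α) else 0) + (if m ≤ a then a ^ (-(α + β)) else 0) := by
  rcases le_total a m with h | h
  · rw [max_eq_right h, if_pos h, mul_comm]
    exact le_add_of_nonneg_right (by split_ifs <;> positivity)
  · rw [max_eq_left h, if_pos h, ← Real.rpow_add ha, ← neg_add]
    exact le_add_of_nonneg_left (by split_ifs <;> positivity)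

theorem summable_and_tsum_one_sided_le {α β : ℝ} (hα : 0 ≤ α) (hαd : α < d) (hαβ : d < α + β) :
    ∃ C, 0 < C ∧ ∀ (u : Zd d) (m : ℕ), 1 ≤ m →
      Summable (fun x => (natBr u x : ℝ) ^ (-α) * max (natBr u x : ℝ) m ^ (-β)) ∧
      ∑' x, (natBr u x : ℝ) ^ (-α) * max (natBr u x : ℝ) m ^ (-β) ≤
        C * (m : ℝ) ^ (-(α + β - d)) := by
  obtain ⟨C₁, hC₁, hball⟩ := summable_and_tsum_ball_le hα hαd
  obtain ⟨C₂, hC₂, htail⟩ := summable_and_tsum_tail_le hαβ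
  refine ⟨C₁ + C₂, by positivity, fun u m hm => ?_⟩
  obtain ⟨hs₁, hle₁⟩ := hball u m hm
  obtain ⟨hs₂, hle₂⟩ := htail u m hm
  have hm0 : (0 : ℝ) < m := by exact_mod_cast hm
  have hs := (hs₁.mul_left ((m : ℝ) ^ (-β))).add hs₂
  have hpt : ∀ x, (natBr u x : ℝ) ^ (-α) * max (natBr u x : ℝ) m ^ (-β) ≤
      (m : ℝ) ^ (-β) * (if natBr u x ≤ m then (natBr u x : ℝ) ^ (-α) else 0) +
        (if m ≤ natBr u x then (natBr u x : ℝ) ^ (-(α + β)) else 0) := fun x => by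
    simpa only [Nat.cast_le] using
      rpow_neg_mul_max_rpow_neg_le (α := α) (β := β) (Nat.cast_pos.2 (natBr_pos u x)) hm0
  refine ⟨hs.of_nonneg_of_le (fun x => by positivity) hpt, ?_⟩
  calc ∑' x, (natBr u x : ℝ) ^ (-α) * max (natBr u x : ℝ) m ^ (-β)
      ≤ ∑' x, ((m : ℝ) ^ (-β) * (if natBr u x ≤ m then (natBr u x : ℝ) ^ (-α) else 0) +
          (if m ≤ natBr u x then (natBr u x : ℝ) ^ (-(α + β)) else 0)) :=
        (hs.of_nonneg_of_le (fun x => by positivity) hpt).tsum_le_tsum hpt hs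
    _ ≤ (m : ℝ) ^ (-β) * (C₁ * (m : ℝ) ^ ((d : ℝ) - α)) + C₂ * (m : ℝ) ^ (-(α + β - d)) := by
        rw [(hs₁.mul_left _).tsum_add hs₂, tsum_mul_left]
        gcongr
    _ = (C₁ + C₂) * (m : ℝ) ^ (-(α + β - d)) := by
        rw [mul_left_comm, ← Real.rpow_add hm0, show -β + (d - α) = -(α + β - d) by ring]
        ring

lemma br_rpow_mul_br_rpow (v w x : Zd d) (α β : ℝ) :
    br v x ^ (-α) * br x w ^ (-β) = (natBr v x : ℝ) ^ (-α) * (natBr w x : ℝ) ^ (-β) := by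
  rw [br_eq_natBr, br_symm, br_eq_natBr]

theorem summable_and_tsum_convolution_le {α β : ℝ} (hα : 0 ≤ α) (hαd : α < d) (hβ : 0 ≤ β)
    (hβd : β < d) (hαβ : d < α + β) :
    ∃ C, 0 < C ∧ ∀ v w : Zd d, Summable (fun x => br v x ^ (-α) * br x w ^ (-β)) ∧
      ∑' x, br v x ^ (-α) * br x w ^ (-β) ≤ C * br v w ^ (-(α + β - d)) := by
  obtain ⟨C₁, hC₁, hv⟩ := summable_and_tsum_one_sided_le (β := β) hα hαd hαβ
  obtain ⟨C₂, hC₂, hw⟩ := summable_and_tsum_one_sided_le (β := α) hβ hβd (by linarith)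
  refine ⟨2 ^ (α + β - d) * (C₁ + C₂), by positivity, fun v w => ?_⟩
  simp only [br_rpow_mul_br_rpow, br_eq_natBr v w]
  set m := (natBr v w + 1) / 2
  have hm : 1 ≤ m := by have := natBr_pos v w; omega
  obtain ⟨hs₁, hle₁⟩ := hv v m hm
  obtain ⟨hs₂, hle₂⟩ := hw w m hm
  have hs := hs₁.add hs₂
  have hpt : ∀ x, (natBr v x : ℝ) ^ (-α) * (natBr w x : ℝ) ^ (-β) ≤
      (natBr v x : ℝ) ^ (-α) * max (natBr v x : ℝ) m ^ (-β) +
        (natBr w x : ℝ) ^ (-β) * max (natBr w x : ℝ) m ^ (-α) := fun x => by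
    have := natBr_add_one_le v w x
    rw [natBr_comm x w] at this
    refine rpow_neg_mul_rpow_neg_le (Nat.cast_pos.2 (natBr_pos v x))
      (Nat.cast_pos.2 (natBr_pos w x)) ?_ hα hβ
    exact_mod_cast (show 2 * m ≤ natBr v x + natBr w x by omega)
  refine ⟨hs.of_nonneg_of_le (fun x => by positivity) hpt, ?_⟩
  have hmr : (m : ℝ) ^ (-(α + β - d)) ≤ 2 ^ (α + β - d) * (natBr v w : ℝ) ^ (-(α + β - d)) :=
    rpow_neg_le_two_rpow_mul_rpow_neg (Nat.cast_pos.2 (natBr_pos v w))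
      (by exact_mod_cast (show natBr v w ≤ 2 * m by omega)) (by linarith)
  calc ∑' x, (natBr v x : ℝ) ^ (-α) * (natBr w x : ℝ) ^ (-β)
      ≤ ∑' x, ((natBr v x : ℝ) ^ (-α) * max (natBr v x : ℝ) m ^ (-β) +
          (natBr w x : ℝ) ^ (-β) * max (natBr w x : ℝ) m ^ (-α)) :=
        (hs.of_nonneg_of_le (fun x => by positivity) hpt).tsum_le_tsum hpt hs
    _ ≤ C₁ * (m : ℝ) ^ (-(α + β - d)) + C₂ * (m : ℝ) ^ (-(β + α - d)) := by
        rw [hs₁.tsum_add hs₂]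
        exact add_le_add hle₁ hle₂
    _ = (C₁ + C₂) * (m : ℝ) ^ (-(α + β - d)) := by rw [add_comm β α]; ring
    _ ≤ 2 ^ (α + β - d) * (C₁ + C₂) * (natBr v w : ℝ) ^ (-(α + β - d)) := by
        rw [mul_comm _ (C₁ + C₂), mul_assoc]
        gcongr

theorem le_tsum_convolution {α β : ℝ} (hα : 0 ≤ α) (hβ : 0 ≤ β) (hd : 0 < d) :
    ∃ c, 0 < c ∧ ∀ v w : Zd d, Summable (fun x => br v x ^ (-α) * br x w ^ (-β)) →
      c * br v w ^ (-(α + β - d)) ≤ ∑' x, br v x ^ (-α) * br x w ^ (-β) := by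
  refine ⟨(d : ℝ)⁻¹ ^ d * 2 ^ (-α) * 3 ^ (-β), by positivity, fun v w hs => ?_⟩
  simp only [br_rpow_mul_br_rpow, br_eq_natBr v w] at hs ⊢
  set r := natBr v w with hr_def
  have hr : (0 : ℝ) < r := by exact_mod_cast natBr_pos v w
  have hterm : ∀ x ∈ box v (r / d), (2 * r : ℝ) ^ (-α) * (3 * r : ℝ) ^ (-β) ≤
      (natBr v x : ℝ) ^ (-α) * (natBr w x : ℝ) ^ (-β) := by
    intro x hx
    have hvx := natBr_le_of_mem_box hx
    have hwx := natBr_add_one_le w x v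
    have hdiv := Nat.mul_div_le r d
    have hr1 := natBr_pos v w
    rw [natBr_comm w v] at hwx
    have h2 : (natBr v x : ℝ) ≤ 2 * r := by exact_mod_cast (show natBr v x ≤ 2 * r by omega)
    have h3 : (natBr w x : ℝ) ≤ 3 * r := by exact_mod_cast (show natBr w x ≤ 3 * r by omega)
    exact mul_le_mul
      (Real.rpow_le_rpow_of_nonpos (Nat.cast_pos.2 (natBr_pos v x)) h2 (by linarith))
      (Real.rpow_le_rpow_of_nonpos (Nat.cast_pos.2 (natBr_pos w x)) h3 (by linarith))
      (by positivity) (by positivity)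
  have hcard : ((r : ℝ) / d) ^ d ≤ #(box v (r / d)) := by
    have h : (r : ℝ) < d * ((r / d : ℕ) + 1) := by exact_mod_cast Nat.lt_mul_div_succ r hd
    rw [card_box]
    push_cast
    gcongr
    rw [div_le_iff₀ (by positivity)]
    nlinarith [(Nat.cast_nonneg (r / d) : (0 : ℝ) ≤ (r / d : ℕ))]
  calc (d : ℝ)⁻¹ ^ d * 2 ^ (-α) * 3 ^ (-β) * (r : ℝ) ^ (-(α + β - d))
      = ((r : ℝ) / d) ^ d * ((2 * r : ℝ) ^ (-α) * (3 * r : ℝ) ^ (-β)) := by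
        rw [Real.mul_rpow zero_le_two hr.le, Real.mul_rpow zero_le_three hr.le,
          show -(α + β - d) = (d : ℝ) + -α + -β by ring, Real.rpow_add hr, Real.rpow_add hr,
          Real.rpow_natCast, div_pow]
        ring
    _ ≤ #(box v (r / d)) * ((2 * r : ℝ) ^ (-α) * (3 * r : ℝ) ^ (-β)) := by gcongr
    _ ≤ ∑ x ∈ box v (r / d), (natBr v x : ℝ) ^ (-α) * (natBr w x : ℝ) ^ (-β) := by
        simpa only [nsmul_eq_mul] using Finset.card_nsmul_le_sum _ _ _ hterm
    _ ≤ _ := hs.sum_le_tsum _ fun x _ => by positivity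

end LatticeConvolution

theorem statement3 {d : ℕ} (α β : ℝ) (hα : α ∈ Set.Ico (0 : ℝ) d) (hβ : β ∈ Set.Ico (0 : ℝ) d)
    (hαβ : (d : ℝ) < α + β) :
    ∃ c C : ℝ, 0 < c ∧ 0 < C ∧ ∀ v w : Zd d,
      c * br v w ^ (-(α + β - d)) ≤ (∑' x : Zd d, br v x ^ (-α) * br x w ^ (-β)) ∧
      (∑' x : Zd d, br v x ^ (-α) * br x w ^ (-β)) ≤ C * br v w ^ (-(α + β - d)) := by
  obtain ⟨hα0, hαd⟩ := hα
  obtain ⟨hβ0, hβd⟩ := hβ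
  obtain ⟨C, hC, hupper⟩ :=
    LatticeConvolution.summable_and_tsum_convolution_le hα0 hαd hβ0 hβd hαβ
  obtain ⟨c, hc, hlower⟩ :=
    LatticeConvolution.le_tsum_convolution hα0 hβ0 (Nat.cast_pos.1 (hα0.trans_lt hαd))
  exact ⟨c, C, hc, hC, fun v w => ⟨hlower v w (hupper v w).1, (hupper v w).2⟩⟩
end

section
/- Let α,β ∈ [0,d) with γ := α+β−d > 0. There is a constant C (depending on α,β,d) such that for all x,y,z ∈ Z^d, Σ_{a∈Z^d} ⟨ax⟩^{−α}·⟨ay⟩^{−β}·⟨az⟩^{−γ} ≤ C·⟨xyz⟩^{−γ}, where ⟨xyz⟩ = min{⟨xy⟩⟨yz⟩, ⟨yz⟩⟨zx⟩, ⟨zx⟩⟨xy⟩}. -/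
open MeasureTheory ProbabilityTheory Finset

set_option maxHeartbeats 1000000

/-!
Write ⟨uv⟩ for `br u v`. Counting lattice points in dyadic shells gives
`∑_{⟨a⟩ ≤ K} ⟨a⟩^{-s} ≲ K^{d-s}` for `0 ≤ s < d` and `∑_{⟨a⟩ > K} ⟨a⟩^{-p} ≲ K^{d-p}` for `p > d`.
If `⟨au⟩ ≤ ⟨av⟩` then also `⟨uv⟩ ≤ 2⟨av⟩`, so splitting at `⟨au⟩ = ⟨uv⟩` these two sums give the
two-point bound `∑_a ⟨au⟩^{-s} ⟨av⟩^{-t} ≲ ⟨uv⟩^{d-s-t}` for `s, t < d < s + t`.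

For three points, if `⟨az⟩ ≤ ⟨ax⟩` then `⟨xz⟩ ≤ 2⟨ax⟩`, and since `γ ≤ α` the exponents of `⟨ax⟩` and
`⟨az⟩` may be swapped: `⟨ax⟩^{-α} ⟨az⟩^{-γ} ≤ ⟨ax⟩^{-γ} ⟨az⟩^{-α} ≲ ⟨xz⟩^{-γ} ⟨az⟩^{-α}`. The two-point
bound for the weights at `z` and `y` then leaves `⟨xz⟩^{-γ} ⟨zy⟩^{-γ} ≤ ⟨xyz⟩^{-γ}`. The case
`⟨az⟩ ≤ ⟨ay⟩` is the same, and otherwise `⟨az⟩^{-γ} ≲ ⟨zx⟩^{-γ}` directly. Sums are taken in `ℝ≥0∞`,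
so no summability has to be tracked.
-/

open scoped ENNReal

namespace ENNReal

lemma rpow_neg_le_rpow_neg {x y : ℝ≥0∞} (h : x ≤ y) {r : ℝ} (hr : 0 ≤ r) : y ^ (-r) ≤ x ^ (-r) := by
  rw [rpow_neg, rpow_neg, ENNReal.inv_le_inv]
  exact rpow_le_rpow h hr

lemma rpow_neg_le_of_le_two_mul {m w : ℝ≥0∞} (h : m ≤ 2 * w) {r : ℝ} (hr : 0 ≤ r) :
    w ^ (-r) ≤ 2 ^ r * m ^ (-r) := by
  have h20 : (2 : ℝ≥0∞) ^ r ≠ 0 := (rpow_pos two_pos ofNat_ne_top).ne'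
  have h2t : (2 : ℝ≥0∞) ^ r ≠ ⊤ := rpow_ne_top_of_nonneg hr ofNat_ne_top
  calc w ^ (-r) = 2 ^ r * (2 * w) ^ (-r) := by
        rw [rpow_neg, rpow_neg, mul_rpow_of_nonneg _ _ hr, ENNReal.mul_inv (.inl h20) (.inl h2t),
          ← mul_assoc, ENNReal.mul_inv_cancel h20 h2t, one_mul]
    _ ≤ 2 ^ r * m ^ (-r) := mul_le_mul_right (rpow_neg_le_rpow_neg h hr) _

lemma rpow_neg_mul_rpow_neg_le {u v : ℝ≥0∞} (huv : u ≤ v) (hu : u ≠ 0) (hv : v ≠ ⊤) {α γ : ℝ}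
    (hγα : γ ≤ α) : v ^ (-α) * u ^ (-γ) ≤ v ^ (-γ) * u ^ (-α) := by
  have hv0 : v ≠ 0 := (pos_iff_ne_zero.2 hu |>.trans_le huv).ne'
  have hut : u ≠ ⊤ := ne_top_of_le_ne_top hv huv
  calc v ^ (-α) * u ^ (-γ) = v ^ (-γ) * v ^ (-(α - γ)) * u ^ (-γ) := by
        rw [← rpow_add _ _ hv0 hv]; ring_nf
    _ ≤ v ^ (-γ) * u ^ (-(α - γ)) * u ^ (-γ) :=
        mul_le_mul_left (mul_le_mul_right (rpow_neg_le_rpow_neg huv (sub_nonneg.2 hγα)) _) _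
    _ = v ^ (-γ) * u ^ (-α) := by
        rw [mul_assoc, ← rpow_add _ _ hu hut]; ring_nf

lemma tsum_geometric_initial_le {q : ℝ≥0∞} (hq : 1 < q) (hq' : q ≠ ⊤) (L : ℕ) :
    ∑' j, (if j ≤ L then q ^ j else 0) ≤ (1 - q⁻¹)⁻¹ * q ^ L := by
  have hq0 : q ≠ 0 := (zero_lt_one.trans hq).ne'
  rw [tsum_eq_sum (s := Finset.range (L + 1)) fun j hj => if_neg (by simpa using hj),
    Finset.sum_congr rfl fun j hj => if_pos (Nat.lt_succ_iff.1 (Finset.mem_range.1 hj))]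
  calc ∑ j ∈ Finset.range (L + 1), q ^ j = ∑ j ∈ Finset.range (L + 1), q ^ L * q⁻¹ ^ j := by
        rw [← Finset.sum_range_reflect (fun j => q ^ L * q⁻¹ ^ j)]
        refine Finset.sum_congr rfl fun j hj => ?_
        have hj : j ≤ L := Nat.lt_succ_iff.1 (Finset.mem_range.1 hj)
        rw [Nat.add_sub_cancel, ← pow_sub_mul_pow q hj, mul_right_comm, ← mul_pow,
          ENNReal.mul_inv_cancel hq0 hq', one_pow, one_mul]
    _ ≤ q ^ L * ∑' j, q⁻¹ ^ j := by
        rw [← Finset.mul_sum]; exact mul_le_mul_right (ENNReal.sum_le_tsum _) _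
    _ = (1 - q⁻¹)⁻¹ * q ^ L := by rw [tsum_geometric, mul_comm]

lemma tsum_geometric_tail_eq (r : ℝ≥0∞) (L : ℕ) :
    ∑' j, (if L ≤ j then r ^ j else 0) = r ^ L * (1 - r)⁻¹ := by
  rw [← (add_left_injective L).tsum_eq]
  · simp [pow_add, ENNReal.tsum_mul_left, tsum_geometric, mul_comm]
  · intro j hj
    exact ⟨j - L, Nat.sub_add_cancel (by_contra fun h => hj (if_neg h))⟩

end ENNReal

section

variable {d : ℕ}

def brNat (a : Zd d) : ℕ := 1 + ∑ i, (a i).natAbs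

lemma brNat_pos (a : Zd d) : 0 < brNat a := by simp [brNat]

lemma brNat_sub_comm (x y : Zd d) : brNat (x - y) = brNat (y - x) := by
  simp only [brNat, Pi.sub_apply]
  congr 1
  exact sum_congr rfl fun i _ => by omega

lemma brNat_sub_le (a x y : Zd d) : brNat (x - y) ≤ brNat (a - x) + brNat (a - y) := by
  have := sum_le_sum fun i (_ : i ∈ univ) =>
    show ((x - y) i).natAbs ≤ ((a - x) i).natAbs + ((a - y) i).natAbs by
      simp only [Pi.sub_apply]; omega
  rw [sum_add_distrib] at this
  simp only [brNat]
  omega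

lemma br_eq_brNat (x y : Zd d) : br x y = brNat (x - y) := by
  simp [br, brNat, Nat.cast_natAbs]

lemma br_pos (x y : Zd d) : 0 < br x y := by
  rw [br_eq_brNat]
  exact_mod_cast brNat_pos _

lemma mem_Icc_of_brNat_le {a : Zd d} {R : ℕ} (h : brNat a ≤ R) : a ∈ Icc (-(R : Zd d)) R := by
  have hle : ∀ i, (a i).natAbs ≤ R := fun i =>
    (single_le_sum (fun j _ => Nat.zero_le ((a j).natAbs)) (mem_univ i)).trans
      (by unfold brNat at h; omega)
  simp only [mem_Icc, Pi.le_def, Pi.neg_apply, Pi.natCast_apply]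
  exact ⟨fun i => by have := hle i; omega, fun i => by have := hle i; omega⟩

lemma card_Icc_natCast (R : ℕ) : #(Icc (-(R : Zd d)) R) = (2 * R + 1) ^ d := by
  simp only [Pi.card_Icc, Pi.neg_apply, Pi.natCast_apply, Int.card_Icc, prod_const, card_univ,
    Fintype.card_fin]
  congr 1
  omega

lemma tsum_le_dyadic (f : Zd d → ℝ≥0∞) (g : ℕ → ℝ≥0∞)
    (h : ∀ a j, 2 ^ j ≤ brNat a → brNat a < 2 ^ (j + 1) → f a ≤ g j) :
    ∑' a, f a ≤ ∑' j, ((2 : ℝ≥0∞) ^ (j + 3)) ^ d * g j := by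
  set shell : Zd d → ℕ := fun a => Nat.log 2 (brNat a)
  have lt_pow (a : Zd d) : brNat a < 2 ^ (shell a + 1) := Nat.lt_pow_succ_log_self one_lt_two _
  calc ∑' a, f a ≤ ∑' a, g (shell a) := ENNReal.tsum_le_tsum fun a =>
        h a _ (Nat.pow_log_le_self 2 (brNat_pos a).ne') (lt_pow a)
    _ = ∑' j, ∑' a : shell ⁻¹' {j}, g (shell a) := (ENNReal.tsum_fiberwise _ shell).symm
    _ ≤ ∑' j, ((2 : ℝ≥0∞) ^ (j + 3)) ^ d * g j := ENNReal.tsum_le_tsum fun j => ?_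
  set box := Icc (-((2 ^ (j + 1) : ℕ) : Zd d)) (2 ^ (j + 1) : ℕ)
  have hsub : shell ⁻¹' {j} ⊆ box := fun a (ha : shell a = j) =>
    mem_Icc_of_brNat_le (ha ▸ (lt_pow a).le)
  have hcard : (#box : ℝ≥0∞) ≤ ((2 : ℝ≥0∞) ^ (j + 3)) ^ d := by
    rw [card_Icc_natCast]
    have : 2 * 2 ^ (j + 1) + 1 ≤ 2 ^ (j + 3) := by
      rw [show 2 ^ (j + 3) = 4 * 2 ^ (j + 1) by ring]; linarith [Nat.one_le_two_pow (n := j + 1)]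
    exact_mod_cast Nat.pow_le_pow_left this d
  calc ∑' a : shell ⁻¹' {j}, g (shell a) = ∑' a : shell ⁻¹' {j}, g j :=
        tsum_congr fun a => congrArg g a.2
    _ ≤ ∑' a : (box : Set (Zd d)), g j := ENNReal.tsum_mono_subtype (fun _ => g j) hsub
    _ = #box * g j := by rw [Finset.tsum_subtype' box (fun _ => g j), sum_const, nsmul_eq_mul]
    _ ≤ ((2 : ℝ≥0∞) ^ (j + 3)) ^ d * g j := mul_le_mul_left hcard _

lemma two_pow_rpow_comm (j : ℕ) (e : ℝ) : ((2 : ℝ≥0∞) ^ j) ^ e = (2 ^ e) ^ j := by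
  rw [← ENNReal.rpow_natCast_mul, ← ENNReal.rpow_mul_natCast, mul_comm]

lemma shell_weight_eq (j : ℕ) (s : ℝ) :
    ((2 : ℝ≥0∞) ^ (j + 3)) ^ d * ((2 : ℝ≥0∞) ^ j) ^ (-s) = 8 ^ d * (2 ^ ((d : ℝ) - s)) ^ j := by
  have h0 : (2 : ℝ≥0∞) ^ j ≠ 0 := pow_ne_zero _ two_ne_zero
  have ht : (2 : ℝ≥0∞) ^ j ≠ ⊤ := ENNReal.pow_ne_top ENNReal.ofNat_ne_top
  rw [pow_add, mul_pow, mul_comm, ← mul_assoc, ← ENNReal.rpow_natCast ((2 : ℝ≥0∞) ^ j) d,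
    ← ENNReal.rpow_add _ _ h0 ht, two_pow_rpow_comm, sub_eq_add_neg]
  norm_num
  ring_nf

lemma tsum_ball_rpow_le {s : ℝ} (hs : 0 ≤ s) (hsd : s < d) :
    ∃ C ≠ ⊤, ∀ K : ℕ, K ≠ 0 →
      ∑' a : Zd d, (if brNat a ≤ K then (brNat a : ℝ≥0∞) ^ (-s) else 0)
        ≤ C * (K : ℝ≥0∞) ^ ((d : ℝ) - s) := by
  set q : ℝ≥0∞ := 2 ^ ((d : ℝ) - s)
  have hq : 1 < q := ENNReal.one_lt_rpow ENNReal.one_lt_two (sub_pos.2 hsd)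
  have hq' : q ≠ ⊤ := ENNReal.rpow_ne_top_of_nonneg (sub_nonneg.2 hsd.le) ENNReal.ofNat_ne_top
  refine ⟨8 ^ d * (1 - q⁻¹)⁻¹, ENNReal.mul_ne_top (ENNReal.pow_ne_top ENNReal.ofNat_ne_top) ?_,
    fun K hK => ?_⟩
  · exact ENNReal.inv_ne_top.2 (tsub_pos_of_lt (ENNReal.inv_lt_one.2 hq)).ne'
  set L := Nat.log 2 K
  calc ∑' a : Zd d, (if brNat a ≤ K then (brNat a : ℝ≥0∞) ^ (-s) else 0)
      ≤ ∑' j, ((2 : ℝ≥0∞) ^ (j + 3)) ^ d * (if j ≤ L then ((2 : ℝ≥0∞) ^ j) ^ (-s) else 0) :=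
        tsum_le_dyadic _ _ fun a j hj _ => ?_
    _ = 8 ^ d * ∑' j, (if j ≤ L then q ^ j else 0) := by
        rw [← ENNReal.tsum_mul_left]
        exact tsum_congr fun j => by split_ifs <;> simp [shell_weight_eq, q]
    _ ≤ 8 ^ d * ((1 - q⁻¹)⁻¹ * q ^ L) :=
        mul_le_mul_right (ENNReal.tsum_geometric_initial_le hq hq' L) _
    _ ≤ 8 ^ d * (1 - q⁻¹)⁻¹ * (K : ℝ≥0∞) ^ ((d : ℝ) - s) := by
        rw [mul_assoc, ← two_pow_rpow_comm]
        gcongr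
        exact_mod_cast Nat.pow_log_le_self 2 hK
  split_ifs with ha hjL
  · exact ENNReal.rpow_neg_le_rpow_neg (by exact_mod_cast hj) hs
  · exact absurd (Nat.le_log_of_pow_le one_lt_two (hj.trans ha)) hjL
  · exact zero_le
  · exact zero_le

lemma tsum_tail_rpow_le {p : ℝ} (hp : d < p) :
    ∃ C ≠ ⊤, ∀ K : ℕ, K ≠ 0 →
      ∑' a : Zd d, (if K < brNat a then (brNat a : ℝ≥0∞) ^ (-p) else 0)
        ≤ C * (K : ℝ≥0∞) ^ ((d : ℝ) - p) := by
  set r : ℝ≥0∞ := 2 ^ ((d : ℝ) - p)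
  have hr : r < 1 := ENNReal.rpow_lt_one_of_one_lt_of_neg ENNReal.one_lt_two (sub_neg.2 hp)
  have hp0 : 0 ≤ p - d := sub_nonneg.2 hp.le
  refine ⟨8 ^ d * (1 - r)⁻¹ * 2 ^ (p - d), ?_, fun K hK => ?_⟩
  · refine ENNReal.mul_ne_top (ENNReal.mul_ne_top (ENNReal.pow_ne_top ENNReal.ofNat_ne_top) ?_)
      (ENNReal.rpow_ne_top_of_nonneg hp0 ENNReal.ofNat_ne_top)
    exact ENNReal.inv_ne_top.2 (tsub_pos_of_lt hr).ne'
  set L := Nat.log 2 K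
  calc ∑' a : Zd d, (if K < brNat a then (brNat a : ℝ≥0∞) ^ (-p) else 0)
      ≤ ∑' j, ((2 : ℝ≥0∞) ^ (j + 3)) ^ d * (if L ≤ j then ((2 : ℝ≥0∞) ^ j) ^ (-p) else 0) :=
        tsum_le_dyadic _ _ fun a j hj hj' => ?_
    _ = 8 ^ d * ∑' j, (if L ≤ j then r ^ j else 0) := by
        rw [← ENNReal.tsum_mul_left]
        exact tsum_congr fun j => by split_ifs <;> simp [shell_weight_eq, r]
    _ = 8 ^ d * (1 - r)⁻¹ * ((2 : ℝ≥0∞) ^ L) ^ (-(p - d)) := by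
        rw [ENNReal.tsum_geometric_tail_eq, two_pow_rpow_comm, neg_sub]; ring
    _ ≤ 8 ^ d * (1 - r)⁻¹ * (2 ^ (p - d) * (K : ℝ≥0∞) ^ (-(p - d))) := by
        gcongr
        refine ENNReal.rpow_neg_le_of_le_two_mul ?_ hp0
        have := Nat.lt_pow_succ_log_self one_lt_two K
        rw [pow_succ'] at this
        exact_mod_cast this.le
    _ = 8 ^ d * (1 - r)⁻¹ * 2 ^ (p - d) * (K : ℝ≥0∞) ^ ((d : ℝ) - p) := by
        rw [neg_sub]; ring
  split_ifs with ha hLj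
  · exact ENNReal.rpow_neg_le_rpow_neg (by exact_mod_cast hj) ((Nat.cast_nonneg d).trans hp.le)
  · exact absurd (Nat.lt_succ_iff.1 (Nat.log_lt_of_lt_pow hK (ha.trans hj'))) hLj
  · exact zero_le
  · exact zero_le


noncomputable def ebr (x y : Zd d) : ℝ≥0∞ := brNat (x - y)

lemma ebr_symm (x y : Zd d) : ebr x y = ebr y x := by
  rw [ebr, ebr, brNat_sub_comm]

lemma ebr_ne_zero (x y : Zd d) : ebr x y ≠ 0 := Nat.cast_ne_zero.2 (brNat_pos _).ne'

lemma ebr_ne_top (x y : Zd d) : ebr x y ≠ ⊤ := ENNReal.natCast_ne_top _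

lemma ofReal_br (x y : Zd d) : ENNReal.ofReal (br x y) = ebr x y := by
  rw [br_eq_brNat, ENNReal.ofReal_natCast, ebr]

lemma ofReal_br_rpow (x y : Zd d) (r : ℝ) : ENNReal.ofReal (br x y ^ r) = ebr x y ^ r := by
  rw [← ENNReal.ofReal_rpow_of_pos (br_pos x y), ofReal_br]

lemma ebr_le_add (a x y : Zd d) : ebr x y ≤ ebr a x + ebr a y := by
  simp only [ebr]
  exact_mod_cast brNat_sub_le a x y

lemma ebr_rpow_neg_le {a x y : Zd d} (h : ebr a y ≤ ebr a x) {r : ℝ} (hr : 0 ≤ r) :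
    ebr a x ^ (-r) ≤ 2 ^ r * ebr x y ^ (-r) := by
  refine ENNReal.rpow_neg_le_of_le_two_mul ?_ hr
  calc ebr x y ≤ ebr a x + ebr a y := ebr_le_add a x y
    _ ≤ 2 * ebr a x := by rw [two_mul]; exact add_le_add_right h _

noncomputable def nearWeight (s t : ℝ) (K n : ℕ) : ℝ≥0∞ :=
  2 ^ t * (K : ℝ≥0∞) ^ (-t) * (if n ≤ K then (n : ℝ≥0∞) ^ (-s) else 0)
    + (if K < n then (n : ℝ≥0∞) ^ (-(s + t)) else 0)

lemma tsum_nearWeight_le {s t : ℝ} (hs : 0 ≤ s) (hsd : s < d) (ht : 0 ≤ t) (hst : d < s + t) :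
    ∃ C ≠ ⊤, ∀ K : ℕ, K ≠ 0 →
      ∑' b : Zd d, nearWeight s t K (brNat b) ≤ C * (K : ℝ≥0∞) ^ (-(s + t - d)) := by
  obtain ⟨A, hA, hball⟩ := tsum_ball_rpow_le (d := d) hs hsd
  obtain ⟨B, hB, htail⟩ := tsum_tail_rpow_le (d := d) hst
  refine ⟨2 ^ t * A + B, ENNReal.add_ne_top.2 ⟨ENNReal.mul_ne_top
    (ENNReal.rpow_ne_top_of_nonneg ht ENNReal.ofNat_ne_top) hA, hB⟩, fun K hK => ?_⟩
  have hKs : (K : ℝ≥0∞) ^ (-t) * (K : ℝ≥0∞) ^ ((d : ℝ) - s) = (K : ℝ≥0∞) ^ ((d : ℝ) - (s + t)) := by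
    rw [← ENNReal.rpow_add _ _ (Nat.cast_ne_zero.2 hK) (ENNReal.natCast_ne_top K)]; ring_nf
  calc ∑' b : Zd d, nearWeight s t K (brNat b)
      = 2 ^ t * (K : ℝ≥0∞) ^ (-t)
          * ∑' b : Zd d, (if brNat b ≤ K then (brNat b : ℝ≥0∞) ^ (-s) else 0)
        + ∑' b : Zd d, (if K < brNat b then (brNat b : ℝ≥0∞) ^ (-(s + t)) else 0) := by
        rw [← ENNReal.tsum_mul_left, ← ENNReal.tsum_add]; rfl
    _ ≤ 2 ^ t * (K : ℝ≥0∞) ^ (-t) * (A * (K : ℝ≥0∞) ^ ((d : ℝ) - s))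
        + B * (K : ℝ≥0∞) ^ ((d : ℝ) - (s + t)) :=
        add_le_add (mul_le_mul_right (hball K hK) _) (htail K hK)
    _ = (2 ^ t * A + B) * (K : ℝ≥0∞) ^ (-(s + t - d)) := by
        rw [neg_sub, ← hKs]; ring

lemma rpow_mul_rpow_le_nearWeight {a u v : Zd d} (h : ebr a u ≤ ebr a v) (s : ℝ) {t : ℝ}
    (ht : 0 ≤ t) :
    ebr a u ^ (-s) * ebr a v ^ (-t) ≤ nearWeight s t (brNat (u - v)) (brNat (a - u)) := by
  by_cases hnear : brNat (a - u) ≤ brNat (u - v)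
  · calc ebr a u ^ (-s) * ebr a v ^ (-t) ≤ ebr a u ^ (-s) * (2 ^ t * ebr v u ^ (-t)) :=
          mul_le_mul_right (ebr_rpow_neg_le h ht) _
      _ = _ := by
          rw [ebr_symm v u]
          simp only [nearWeight, if_pos hnear, if_neg (not_lt.2 hnear), add_zero, ebr]
          ring
  · calc ebr a u ^ (-s) * ebr a v ^ (-t) ≤ ebr a u ^ (-s) * ebr a u ^ (-t) :=
          mul_le_mul_right (ENNReal.rpow_neg_le_rpow_neg h ht) _
      _ = _ := by
          rw [← ENNReal.rpow_add _ _ (ebr_ne_zero a u) (ebr_ne_top a u), ← neg_add]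
          simp only [nearWeight, if_neg hnear, if_pos (not_le.1 hnear), mul_zero, zero_add, ebr]

lemma tsum_two_point_le {s t : ℝ} (hsd : s < d) (htd : t < d) (hst : d < s + t) :
    ∃ C ≠ ⊤, ∀ u v : Zd d,
      ∑' a, ebr a u ^ (-s) * ebr a v ^ (-t) ≤ C * ebr u v ^ (-(s + t - d)) := by
  have hs : 0 ≤ s := by linarith
  have ht : 0 ≤ t := by linarith
  obtain ⟨C₁, hC₁, h₁⟩ := tsum_nearWeight_le (d := d) hs hsd ht hst
  obtain ⟨C₂, hC₂, h₂⟩ := tsum_nearWeight_le (d := d) ht htd hs (by linarith)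
  refine ⟨C₁ + C₂, ENNReal.add_ne_top.2 ⟨hC₁, hC₂⟩, fun u v => ?_⟩
  set K := brNat (u - v)
  have hK : K ≠ 0 := (brNat_pos _).ne'
  calc ∑' a, ebr a u ^ (-s) * ebr a v ^ (-t)
      ≤ ∑' a, (nearWeight s t K (brNat (a - u)) + nearWeight t s K (brNat (a - v))) :=
        ENNReal.tsum_le_tsum fun a => by
          rcases le_total (ebr a u) (ebr a v) with h | h
          · exact (rpow_mul_rpow_le_nearWeight h s ht).trans le_self_add
          · have := rpow_mul_rpow_le_nearWeight h t hs
            rw [brNat_sub_comm v u] at this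
            rw [mul_comm]
            exact this.trans le_add_self
    _ = ∑' b, nearWeight s t K (brNat b) + ∑' b, nearWeight t s K (brNat b) := by
        rw [ENNReal.tsum_add]
        exact congrArg₂ (· + ·) ((Equiv.subRight u).tsum_eq fun b => nearWeight s t K (brNat b))
          ((Equiv.subRight v).tsum_eq fun b => nearWeight t s K (brNat b))
    _ ≤ C₁ * (K : ℝ≥0∞) ^ (-(s + t - d)) + C₂ * (K : ℝ≥0∞) ^ (-(t + s - d)) :=
        add_le_add (h₁ K hK) (h₂ K hK)
    _ = (C₁ + C₂) * ebr u v ^ (-(s + t - d)) := by rw [add_comm t s, add_mul]; rfl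

lemma ebr_rpow_neg_mul_rpow_neg_le {a v w : Zd d} (h : ebr a w ≤ ebr a v) {e γ : ℝ} (hγ : 0 ≤ γ)
    (hγe : γ ≤ e) : ebr a v ^ (-e) * ebr a w ^ (-γ) ≤ 2 ^ γ * ebr v w ^ (-γ) * ebr a w ^ (-e) :=
  (ENNReal.rpow_neg_mul_rpow_neg_le h (ebr_ne_zero a w) (ebr_ne_top a v) hγe).trans
    (mul_le_mul_left (ebr_rpow_neg_le h hγ) _)

lemma ebr_three_point_le {α β γ : ℝ} (hγ : 0 ≤ γ) (hγα : γ ≤ α) (hγβ : γ ≤ β) (a x y z : Zd d) :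
    ebr a x ^ (-α) * ebr a y ^ (-β) * ebr a z ^ (-γ)
      ≤ 2 ^ γ * (ebr x z ^ (-γ) * (ebr a z ^ (-α) * ebr a y ^ (-β))
        + ebr y z ^ (-γ) * (ebr a x ^ (-α) * ebr a z ^ (-β))
        + ebr z x ^ (-γ) * (ebr a x ^ (-α) * ebr a y ^ (-β))) := by
  by_cases hzx : ebr a z ≤ ebr a x
  · calc ebr a x ^ (-α) * ebr a y ^ (-β) * ebr a z ^ (-γ)
        = ebr a x ^ (-α) * ebr a z ^ (-γ) * ebr a y ^ (-β) := by ring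
      _ ≤ 2 ^ γ * ebr x z ^ (-γ) * ebr a z ^ (-α) * ebr a y ^ (-β) :=
        mul_le_mul_left (ebr_rpow_neg_mul_rpow_neg_le hzx hγ hγα) _
      _ = 2 ^ γ * (ebr x z ^ (-γ) * (ebr a z ^ (-α) * ebr a y ^ (-β))) := by ring
      _ ≤ _ := mul_le_mul_right (le_self_add.trans le_self_add) _
  by_cases hzy : ebr a z ≤ ebr a y
  · calc ebr a x ^ (-α) * ebr a y ^ (-β) * ebr a z ^ (-γ)
        = ebr a x ^ (-α) * (ebr a y ^ (-β) * ebr a z ^ (-γ)) := by ring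
      _ ≤ ebr a x ^ (-α) * (2 ^ γ * ebr y z ^ (-γ) * ebr a z ^ (-β)) :=
        mul_le_mul_right (ebr_rpow_neg_mul_rpow_neg_le hzy hγ hγβ) _
      _ = 2 ^ γ * (ebr y z ^ (-γ) * (ebr a x ^ (-α) * ebr a z ^ (-β))) := by ring
      _ ≤ _ := mul_le_mul_right (le_add_self.trans le_self_add) _
  · calc ebr a x ^ (-α) * ebr a y ^ (-β) * ebr a z ^ (-γ)
        ≤ ebr a x ^ (-α) * ebr a y ^ (-β) * (2 ^ γ * ebr z x ^ (-γ)) :=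
        mul_le_mul_right (ebr_rpow_neg_le (not_le.1 hzx).le hγ) _
      _ = 2 ^ γ * (ebr z x ^ (-γ) * (ebr a x ^ (-α) * ebr a y ^ (-β))) := by ring
      _ ≤ _ := mul_le_mul_right le_add_self _

lemma tsum_three_point_le {α β : ℝ} (hαd : α < d) (hβd : β < d) (hγ : 0 < α + β - d) :
    ∃ C ≠ ⊤, ∀ x y z : Zd d,
      ∑' a, ebr a x ^ (-α) * ebr a y ^ (-β) * ebr a z ^ (-(α + β - d))
        ≤ C * min (ebr x y * ebr y z) (min (ebr y z * ebr z x) (ebr z x * ebr x y))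
          ^ (-(α + β - d)) := by
  set γ := α + β - d
  obtain ⟨C, hC, htwo⟩ := tsum_two_point_le hαd hβd (by linarith)
  refine ⟨2 ^ γ * (3 * C), ENNReal.mul_ne_top (ENNReal.rpow_ne_top_of_nonneg hγ.le
    ENNReal.ofNat_ne_top) (ENNReal.mul_ne_top ENNReal.ofNat_ne_top hC), fun x y z => ?_⟩
  set M := min (ebr x y * ebr y z) (min (ebr y z * ebr z x) (ebr z x * ebr x y))
  have hM {u v w t : Zd d} (h : M ≤ ebr u v * ebr w t) :
      ebr u v ^ (-γ) * ebr w t ^ (-γ) ≤ M ^ (-γ) := by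
    rw [← ENNReal.mul_rpow_of_ne_zero (ebr_ne_zero u v) (ebr_ne_zero w t)]
    exact ENNReal.rpow_neg_le_rpow_neg h hγ.le
  calc ∑' a, ebr a x ^ (-α) * ebr a y ^ (-β) * ebr a z ^ (-γ)
      ≤ ∑' a, 2 ^ γ * (ebr x z ^ (-γ) * (ebr a z ^ (-α) * ebr a y ^ (-β))
        + ebr y z ^ (-γ) * (ebr a x ^ (-α) * ebr a z ^ (-β))
        + ebr z x ^ (-γ) * (ebr a x ^ (-α) * ebr a y ^ (-β))) :=
        ENNReal.tsum_le_tsum fun a => ebr_three_point_le hγ.le (by linarith) (by linarith) a x y z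
    _ ≤ 2 ^ γ * (ebr x z ^ (-γ) * (C * ebr z y ^ (-γ)) + ebr y z ^ (-γ) * (C * ebr x z ^ (-γ))
        + ebr z x ^ (-γ) * (C * ebr x y ^ (-γ))) := by
        simp only [ENNReal.tsum_mul_left, ENNReal.tsum_add]
        gcongr <;> apply htwo
    _ ≤ 2 ^ γ * (C * M ^ (-γ) + C * M ^ (-γ) + C * M ^ (-γ)) := by
        simp only [mul_left_comm _ C]
        gcongr
        · refine hM ?_
          rw [ebr_symm x z, ebr_symm z y, mul_comm]
          exact (min_le_right _ _).trans (min_le_left _ _)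
        · refine hM ?_
          rw [ebr_symm x z]
          exact (min_le_right _ _).trans (min_le_left _ _)
        · exact hM ((min_le_right _ _).trans (min_le_right _ _))
    _ = 2 ^ γ * (3 * C) * M ^ (-γ) := by ring

end

lemma tsum_le_of_tsum_ofReal_le {ι : Type*} {f : ι → ℝ} (hf : ∀ i, 0 ≤ f i) {B : ℝ} (hB : 0 ≤ B)
    (h : ∑' i, ENNReal.ofReal (f i) ≤ ENNReal.ofReal B) : ∑' i, f i ≤ B := by
  calc ∑' i, f i = ∑' i, (ENNReal.ofReal (f i)).toReal :=
        tsum_congr fun i => (ENNReal.toReal_ofReal (hf i)).symm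
    _ = (∑' i, ENNReal.ofReal (f i)).toReal :=
        (ENNReal.tsum_toReal_eq fun _ => ENNReal.ofReal_ne_top).symm
    _ ≤ B := ENNReal.toReal_le_of_le_ofReal hB h

theorem statement5 {d : ℕ} (α β : ℝ) (hα : α ∈ Set.Ico (0 : ℝ) d) (hβ : β ∈ Set.Ico (0 : ℝ) d)
    (hγ : 0 < α + β - d) :
    ∃ C : ℝ, 0 < C ∧ ∀ x y z : Zd d,
      (∑' a : Zd d, br a x ^ (-α) * br a y ^ (-β) * br a z ^ (-(α + β - d)))
        ≤ C * (min (br x y * br y z) (min (br y z * br z x) (br z x * br x y)))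
              ^ (-(α + β - d)) := by
  obtain ⟨C, hC, hsum⟩ := tsum_three_point_le hα.2 hβ.2 hγ
  refine ⟨C.toReal + 1, by positivity, fun x y z => ?_⟩
  have hM : 0 < min (br x y * br y z) (min (br y z * br z x) (br z x * br x y)) := by
    simp only [lt_min_iff]
    exact ⟨mul_pos (br_pos _ _) (br_pos _ _), mul_pos (br_pos _ _) (br_pos _ _),
      mul_pos (br_pos _ _) (br_pos _ _)⟩
  have hnn (u v : Zd d) (r : ℝ) : 0 ≤ br u v ^ r := Real.rpow_nonneg (br_pos u v).le r
  have hterm (a : Zd d) : ENNReal.ofReal (br a x ^ (-α) * br a y ^ (-β) * br a z ^ (-(α + β - d)))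
      = ebr a x ^ (-α) * ebr a y ^ (-β) * ebr a z ^ (-(α + β - d)) := by
    rw [ENNReal.ofReal_mul (mul_nonneg (hnn _ _ _) (hnn _ _ _)), ENNReal.ofReal_mul (hnn _ _ _),
      ofReal_br_rpow, ofReal_br_rpow, ofReal_br_rpow]
  refine tsum_le_of_tsum_ofReal_le (fun a => mul_nonneg (mul_nonneg (hnn _ _ _) (hnn _ _ _))
    (hnn _ _ _)) (by positivity) ?_
  rw [tsum_congr hterm, ENNReal.ofReal_mul (by positivity), ← ENNReal.ofReal_rpow_of_pos hM]
  simp only [ENNReal.ofReal_min, ENNReal.ofReal_mul (br_pos _ _).le, ofReal_br]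
  refine (hsum x y z).trans (mul_le_mul_left ?_ _)
  exact (ENNReal.le_ofReal_iff_toReal_le hC (by positivity)).2 (by linarith)
end

section
/- Let (X,F,μ) be a probability space, and let {F_n} and {G_n} be two decreasing sequences of complete sub-σ-fields with G_1 independent of F_1. If both ∩_{n≥1} F_n and ∩_{n≥1} G_n are trivial (consist only of events of probability 0 or 1), then ∩_{n≥1} (F_n ∨ G_n) is trivial, where F_n ∨ G_n is the σ-field generated by F_n ∪ G_n. -/
open MeasureTheory ProbabilityTheory Finset

set_option maxHeartbeats 1000000

/-! Write `H = ⨅ n, F n ⊔ G n`. For `S` measurable for every `F ⊔ G n`, with `F ⊥ G 0`, the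
conditional expectation `Y = μ[1_S | G 0]` agrees a.e. with `μ[1_S | G n]` for every `n`;
since the `G n` are complete, `Y` is then measurable for the trivial tail `⨅ n, G n`, so
`Y = μ S` a.e. and `S ⊥ G 0`. Applied once as stated and once with `F` and `G` exchanged,
this factorises `μ (A ∩ C ∩ D) = μ A * μ C * μ D` for `A ∈ H`, `C ∈ F 0`, `D ∈ G 0`.
The sets `C ∩ D` form a π-system generating `F 0 ⊔ G 0 ≥ H`, so `H` is independent of
itself. -/

open Set

section

variable {X : Type*} {m m₀ : MeasurableSpace X} {μ : Measure X}

lemma IsPiSystem.image2_inter {S T : Set (Set X)} (hS : IsPiSystem S) (hT : IsPiSystem T) :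
    IsPiSystem (image2 (· ∩ ·) S T) := by
  rintro _ ⟨C, hC, D, hD, rfl⟩ _ ⟨C', hC', D', hD', rfl⟩ hne
  rw [inter_inter_inter_comm] at hne ⊢
  exact mem_image2_of_mem (hS C hC C' hC' hne.left) (hT D hD D' hD' hne.right)

lemma MeasurableSpace.sup_eq_generateFrom_image2_inter (m₁ m₂ : MeasurableSpace X) :
    m₁ ⊔ m₂ = MeasurableSpace.generateFrom
      (image2 (· ∩ ·) {s | MeasurableSet[m₁] s} {t | MeasurableSet[m₂] t}) := by
  refine le_antisymm (sup_le (fun s hs => ?_) (fun t ht => ?_)) ?_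
  · exact measurableSet_generateFrom ⟨s, hs, univ, MeasurableSet.univ, inter_univ s⟩
  · exact measurableSet_generateFrom ⟨univ, MeasurableSet.univ, t, ht, univ_inter t⟩
  · refine generateFrom_le ?_
    rintro _ ⟨C, hC, D, hD, rfl⟩
    exact (le_sup_left (b := m₂) C hC).inter (le_sup_right (a := m₁) D hD)

lemma setIntegral_eq_setIntegral_of_isPiSystem [IsFiniteMeasure μ] (hm : m ≤ m₀)
    {s : Set (Set X)} (h_eq : m = MeasurableSpace.generateFrom s) (h_inter : IsPiSystem s)
    {f g : X → ℝ} (hf : Integrable f μ) (hg : Integrable g μ)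
    (h_univ : ∫ x, f x ∂μ = ∫ x, g x ∂μ)
    (basic : ∀ t ∈ s, ∫ x in t, f x ∂μ = ∫ x in t, g x ∂μ)
    {t : Set X} (ht : MeasurableSet[m] t) : ∫ x in t, f x ∂μ = ∫ x in t, g x ∂μ := by
  induction t, ht using MeasurableSpace.induction_on_inter h_eq h_inter with
  | empty => simp
  | basic t ht => exact basic t ht
  | compl t ht h_eq =>
    have hf' := integral_add_compl (hm t ht) hf
    have hg' := integral_add_compl (hm t ht) hg
    linarith
  | iUnion f' hdisj hf'm h_eq =>
    have hf'm₀ i : MeasurableSet (f' i) := hm _ (hf'm i)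
    rw [integral_iUnion hf'm₀ hdisj hf.integrableOn,
      integral_iUnion hf'm₀ hdisj hg.integrableOn]
    exact tsum_congr h_eq

lemma setIntegral_eq_measureReal_mul_integral_of_indep [IsProbabilityMeasure μ]
    {F G : MeasurableSpace X} (hF : F ≤ m₀) (hG : G ≤ m₀) (hindep : Indep F G μ)
    {C : Set X} (hC : MeasurableSet[F] C)
    {g : X → ℝ} (hg : Integrable g μ) (hgG : StronglyMeasurable[G] g) :
    ∫ x in C, g x ∂μ = μ.real C * ∫ x, g x ∂μ := by
  calc ∫ x in C, g x ∂μ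
      = ∫ x in C, (μ[g | F]) x ∂μ := (setIntegral_condExp hF hg hC).symm
    _ = ∫ x in C, (fun _ => ∫ y, g y ∂μ) x ∂μ := setIntegral_congr_ae (hF C hC)
        ((condExp_indep_eq hG hF hgG hindep.symm).mono fun x hx _ => hx)
    _ = μ.real C * ∫ x, g x ∂μ := by rw [setIntegral_const, smul_eq_mul]

lemma setIntegral_condExp_indicator_comm [IsFiniteMeasure μ] (hm : m ≤ m₀) {s t : Set X}
    (hs : MeasurableSet s) (ht : MeasurableSet t) :
    ∫ x in s, (μ[t.indicator (1 : X → ℝ) | m]) x ∂μ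
      = ∫ x in t, (μ[s.indicator (1 : X → ℝ) | m]) x ∂μ := by
  have h : ∀ {s t : Set X}, MeasurableSet s → MeasurableSet t →
      ∫ x in s, (μ[t.indicator (1 : X → ℝ) | m]) x ∂μ
        = ∫ x, (μ[t.indicator (1 : X → ℝ) | m]) x * (μ[s.indicator 1 | m]) x ∂μ := by
    intro s t hs ht
    have hprod : μ[t.indicator (1 : X → ℝ) | m] * s.indicator 1
        = s.indicator μ[t.indicator 1 | m] := by
      ext x
      by_cases hx : x ∈ s <;> simp [hx]
    calc ∫ x in s, (μ[t.indicator (1 : X → ℝ) | m]) x ∂μ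
        = ∫ x, (μ[μ[t.indicator (1 : X → ℝ) | m] * s.indicator 1 | m]) x ∂μ := by
          rw [integral_condExp hm, hprod, integral_indicator hs]
      _ = _ := integral_congr_ae <|
          condExp_mul_of_stronglyMeasurable_left stronglyMeasurable_condExp
            (hprod ▸ integrable_condExp.indicator hs) ((integrable_const (1 : ℝ)).indicator hs)
  simp_rw [h hs ht, h ht hs, mul_comm]

lemma condExp_sup_indep_eq [IsProbabilityMeasure μ] {F G G' : MeasurableSpace X}
    (hF : F ≤ m₀) (hG : G ≤ m₀) (hG' : G' ≤ G) (hindep : Indep F G μ)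
    {f : X → ℝ} (hf : Integrable f μ) (hfG : StronglyMeasurable[G] f) :
    μ[f | F ⊔ G'] =ᵐ[μ] μ[f | G'] := by
  have hG'₀ : G' ≤ m₀ := hG'.trans hG
  have hFG' : F ⊔ G' ≤ m₀ := sup_le hF hG'₀
  have h_rect : ∀ g : X → ℝ, Integrable g μ → StronglyMeasurable[G] g →
      ∀ {C D : Set X}, MeasurableSet[F] C → MeasurableSet[G'] D →
      ∫ x in C ∩ D, g x ∂μ = μ.real C * ∫ x in D, g x ∂μ := by
    intro g hg hgG C D hC hD
    rw [← setIntegral_indicator (hG'₀ D hD), ← integral_indicator (hG'₀ D hD)]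
    exact setIntegral_eq_measureReal_mul_integral_of_indep hF hG hindep hC
      (hg.indicator (hG'₀ D hD)) (hgG.indicator (hG' D hD))
  refine (ae_eq_condExp_of_forall_setIntegral_eq hFG' hf
    (fun _ _ _ => integrable_condExp.integrableOn) (fun S hS _ => ?_)
    (stronglyMeasurable_condExp.mono (le_sup_right : G' ≤ F ⊔ G')).aestronglyMeasurable).symm
  refine setIntegral_eq_setIntegral_of_isPiSystem hFG'
    (MeasurableSpace.sup_eq_generateFrom_image2_inter F G')
    ((@MeasurableSpace.isPiSystem_measurableSet X F).image2_inter
      (@MeasurableSpace.isPiSystem_measurableSet X G'))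
    integrable_condExp hf (integral_condExp hG'₀) ?_ hS
  rintro _ ⟨C, hC, D, hD, rfl⟩
  rw [h_rect _ integrable_condExp (stronglyMeasurable_condExp.mono hG') hC hD,
    h_rect f hf hfG hC hD, setIntegral_condExp hG'₀ hf hD]

lemma condExp_indicator_eq_of_indep [IsProbabilityMeasure μ] {F G G' : MeasurableSpace X}
    (hF : F ≤ m₀) (hG : G ≤ m₀) (hG' : G' ≤ G) (hindep : Indep F G μ)
    {S : Set X} (hS : MeasurableSet[F ⊔ G'] S) :
    μ[S.indicator (1 : X → ℝ) | G] =ᵐ[μ] μ[S.indicator 1 | G'] := by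
  have hG'₀ : G' ≤ m₀ := hG'.trans hG
  have hFG' : F ⊔ G' ≤ m₀ := sup_le hF hG'₀
  have hS₀ : MeasurableSet[m₀] S := hFG' S hS
  refine (ae_eq_condExp_of_forall_setIntegral_eq hG ((integrable_const (1 : ℝ)).indicator hS₀)
    (fun _ _ _ => integrable_condExp.integrableOn) (fun B hB _ => ?_)
    (stronglyMeasurable_condExp.mono hG').aestronglyMeasurable).symm
  have hB₀ : MeasurableSet[m₀] B := hG B hB
  have hB_int : Integrable (B.indicator (1 : X → ℝ)) μ :=
    (integrable_const (1 : ℝ)).indicator hB₀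
  calc ∫ x in B, (μ[S.indicator 1 | G']) x ∂μ
      = ∫ x in S, (μ[B.indicator 1 | G']) x ∂μ :=
        setIntegral_condExp_indicator_comm hG'₀ hB₀ hS₀
    _ = ∫ x in S, (μ[B.indicator 1 | F ⊔ G']) x ∂μ := setIntegral_congr_ae hS₀
        ((condExp_sup_indep_eq hF hG hG' hindep hB_int
          (stronglyMeasurable_const.indicator hB)).mono fun x hx _ => hx.symm)
    _ = ∫ x in S, B.indicator 1 x ∂μ := setIntegral_condExp hFG' hB_int hS
    _ = ∫ x in B, S.indicator 1 x ∂μ := by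
        rw [setIntegral_indicator hB₀, setIntegral_indicator hS₀, inter_comm]

lemma indep_sup_of_measure_inter_inter [IsProbabilityMeasure μ] {H F G : MeasurableSpace X}
    (hH : H ≤ m₀) (hF : F ≤ m₀) (hG : G ≤ m₀)
    (h : ∀ A C D, MeasurableSet[H] A → MeasurableSet[F] C → MeasurableSet[G] D →
      μ (A ∩ (C ∩ D)) = μ A * μ (C ∩ D)) :
    Indep H (F ⊔ G) μ :=
  IndepSets.indep hH (sup_le hF hG) (@MeasurableSpace.isPiSystem_measurableSet X H)
    ((@MeasurableSpace.isPiSystem_measurableSet X F).image2_inter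
      (@MeasurableSpace.isPiSystem_measurableSet X G))
    (@MeasurableSpace.generateFrom_measurableSet X H).symm
    (MeasurableSpace.sup_eq_generateFrom_image2_inter F G)
    ((IndepSets_iff _ _ μ).2 fun A _ hA ⟨C, hC, D, hD, hCD⟩ => hCD ▸ h A C D hA hC hD)

lemma measurable_of_ae_eq_of_forall_null_measurableSet {β : Type*} [MeasurableSpace β]
    (hnull : ∀ s, μ s = 0 → MeasurableSet[m] s) {f g : X → β} (hg : Measurable[m] g)
    (hfg : f =ᵐ[μ] g) : Measurable[m] f := by
  intro B hB
  have hE : μ {x | f x ≠ g x} = 0 := hfg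
  have h_split :
      f ⁻¹' B = (g ⁻¹' B \ {x | f x ≠ g x}) ∪ (f ⁻¹' B ∩ {x | f x ≠ g x}) := by
    ext x
    by_cases hx : f x = g x <;> simp [hx]
  rw [h_split]
  exact ((hg hB).diff (hnull _ hE)).union (hnull _ (measure_mono_null inter_subset_right hE))

lemma indep_of_forall_measure_eq_zero_or_one [IsProbabilityMeasure μ] {T : MeasurableSpace X}
    (hT : T ≤ m₀) (htriv : ∀ A, MeasurableSet[T] A → μ A = 0 ∨ μ A = 1)
    (m' : MeasurableSpace X) : Indep T m' μ := by
  refine (Indep_iff T m' μ).2 fun A B hA _ => ?_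
  rcases htriv A hA with h | h
  · rw [h, zero_mul]
    exact measure_mono_null inter_subset_left h
  · rw [h, one_mul, inter_comm]
    exact measure_inter_conull ((prob_compl_eq_zero_iff (hT A hA)).2 h)

lemma ae_eq_integral_of_forall_measure_eq_zero_or_one [IsProbabilityMeasure μ]
    {T : MeasurableSpace X} (hT : T ≤ m₀)
    (htriv : ∀ A, MeasurableSet[T] A → μ A = 0 ∨ μ A = 1) {Y : X → ℝ}
    (hY : StronglyMeasurable[T] Y) (hYint : Integrable Y μ) :
    Y =ᵐ[μ] fun _ => ∫ x, Y x ∂μ := by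
  have h := condExp_indep_eq hT hT hY (indep_of_forall_measure_eq_zero_or_one hT htriv T)
  rwa [condExp_of_stronglyMeasurable hT hY hYint] at h

lemma indep_iInf_sup_of_indep [IsProbabilityMeasure μ] {F : MeasurableSpace X}
    {G : ℕ → MeasurableSpace X} (hF : F ≤ m₀) (hG : G 0 ≤ m₀) (hGanti : Antitone G)
    (hGcomp : ∀ n s, μ s = 0 → MeasurableSet[G n] s) (hindep : Indep F (G 0) μ)
    (hGtriv : ∀ A, MeasurableSet[⨅ n, G n] A → μ A = 0 ∨ μ A = 1) :
    Indep (⨅ n, F ⊔ G n) (G 0) μ := by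
  refine (Indep_iff _ _ μ).2 fun S D hS hD => ?_
  have hSn : ∀ n, MeasurableSet[F ⊔ G n] S := MeasurableSpace.measurableSet_iInf.1 hS
  have hS₀ : MeasurableSet[m₀] S := sup_le hF hG S (hSn 0)
  set Y := μ[S.indicator (1 : X → ℝ) | G 0]
  have hY_tail : StronglyMeasurable[⨅ n, G n] Y := by
    refine Measurable.stronglyMeasurable fun B hB =>
      MeasurableSpace.measurableSet_iInf.2 fun n => ?_
    exact measurable_of_ae_eq_of_forall_null_measurableSet (hGcomp n)
      stronglyMeasurable_condExp.measurable
      (condExp_indicator_eq_of_indep hF hG (hGanti (Nat.zero_le n)) hindep (hSn n)) hB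
  have hY_const : Y =ᵐ[μ] fun _ => μ.real S := by
    have h := ae_eq_integral_of_forall_measure_eq_zero_or_one (iInf_le_of_le 0 hG) hGtriv
      hY_tail integrable_condExp
    rwa [integral_condExp hG, integral_indicator_one hS₀] at h
  have h_real : μ.real (S ∩ D) = μ.real S * μ.real D :=
    calc μ.real (S ∩ D) = ∫ x in D, S.indicator 1 x ∂μ := by
          rw [integral_indicator_one hS₀, measureReal_restrict_apply hS₀]
      _ = ∫ x in D, Y x ∂μ :=
          (setIntegral_condExp hG ((integrable_const (1 : ℝ)).indicator hS₀) hD).symm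
      _ = μ.real S * μ.real D := by
          rw [setIntegral_congr_ae (hG D hD) (hY_const.mono fun x hx _ => hx),
            setIntegral_const, smul_eq_mul, mul_comm]
  rw [← ofReal_measureReal, h_real, ENNReal.ofReal_mul measureReal_nonneg, ofReal_measureReal,
    ofReal_measureReal]

end

theorem statement7 {X : Type*} [m : MeasurableSpace X] (μ : Measure X)
    [IsProbabilityMeasure μ] (F G : ℕ → MeasurableSpace X)
    (hFle : ∀ n, F n ≤ m) (hGle : ∀ n, G n ≤ m)
    (hFanti : Antitone F) (hGanti : Antitone G)
    (hFcomp : ∀ n, ∀ s : Set X, μ s = 0 → MeasurableSet[F n] s)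
    (hGcomp : ∀ n, ∀ s : Set X, μ s = 0 → MeasurableSet[G n] s)
    (hindep : ProbabilityTheory.Indep (F 0) (G 0) μ)
    (hFtriv : ∀ A : Set X, MeasurableSet[⨅ n, F n] A → μ A = 0 ∨ μ A = 1)
    (hGtriv : ∀ A : Set X, MeasurableSet[⨅ n, G n] A → μ A = 0 ∨ μ A = 1) :
    ∀ A : Set X, MeasurableSet[⨅ n, F n ⊔ G n] A → μ A = 0 ∨ μ A = 1 := by
  have hFG : F 0 ⊔ G 0 ≤ m := sup_le (hFle 0) (hGle 0)
  have hH : (⨅ n, F n ⊔ G n) ≤ F 0 ⊔ G 0 := iInf_le _ 0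
  have hG_side : Indep (⨅ n, F 0 ⊔ G n) (G 0) μ :=
    indep_iInf_sup_of_indep (hFle 0) (hGle 0) hGanti hGcomp hindep hGtriv
  have hF_side : Indep (⨅ n, G 0 ⊔ F n) (F 0) μ :=
    indep_iInf_sup_of_indep (hGle 0) (hFle 0) hFanti hFcomp hindep.symm hFtriv
  refine fun A hA => measure_eq_zero_or_one_of_indep_self
    (indep_of_indep_of_le_right ?_ hH) hA
  refine indep_sup_of_measure_inter_inter (hH.trans hFG) (hFle 0) (hGle 0)
    fun A C D hA hC hD => ?_
  have hAn : ∀ n, MeasurableSet[F n ⊔ G n] A := MeasurableSpace.measurableSet_iInf.1 hA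
  have hAC : MeasurableSet[⨅ n, F 0 ⊔ G n] (A ∩ C) :=
    MeasurableSpace.measurableSet_iInf.2 fun n =>
      (sup_le_sup_right (hFanti (Nat.zero_le n)) _ _ (hAn n)).inter (le_sup_left (b := G n) C hC)
  have hA' : MeasurableSet[⨅ n, G 0 ⊔ F n] A :=
    MeasurableSpace.measurableSet_iInf.2 fun n =>
      sup_le le_sup_right (le_sup_of_le_left (hGanti (Nat.zero_le n))) A (hAn n)
  rw [← inter_assoc, (Indep_iff _ _ μ).1 hG_side _ _ hAC hD,
    (Indep_iff _ _ μ).1 hF_side _ _ hA' hC, (Indep_iff _ _ μ).1 hindep _ _ hC hD, mul_assoc]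
end

section
/- Let G = (V,E) be a finite connected graph, ρ ∈ V, and D ⊂ V∖{ρ}. Let G_- be the subgraph of G induced on V∖D, let Γ* be the set of spanning trees t of G such that for every w ∈ V∖D the path in t from w to ρ avoids D, and assume Γ* is nonempty. If T is a uniformly random spanning tree of G, then conditioned on T ∈ Γ*, the edge set T ∩ E(G_-) is distributed as a uniformly random spanning tree of G_-. -/
open Finset
open scoped Classical

set_option maxHeartbeats 1000000

/-- `t` (a finite set of edges) is a spanning tree of the graph `G`. -/
def SpTree {W : Type*} (G : SimpleGraph W) (t : Finset (Sym2 W)) : Prop :=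
  ↑t ⊆ G.edgeSet ∧ (∀ e ∈ t, ¬ e.IsDiag) ∧
    (SimpleGraph.fromEdgeSet (↑t : Set (Sym2 W))).IsTree

/-- The event `Γ*`: for every vertex `w ∉ D`, the path in the tree `t` from `w`
to `ρ` avoids `D` (expressed as the existence of a walk avoiding `D`). -/
def AvoidsD {V : Type*} (t : Finset (Sym2 V)) (ρ : V) (D : Finset V) : Prop :=
  ∀ w : V, w ∉ D → ∃ p : (SimpleGraph.fromEdgeSet (↑t : Set (Sym2 V))).Walk w ρ,
    ∀ v ∈ p.support, v ∉ D

/-- The restriction of an edge set to the edges with both endpoints outside `D`. -/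
noncomputable def restrictE {V : Type*} (t : Finset (Sym2 V)) (D : Finset V) :
    Finset (Sym2 V) :=
  t.filter fun e => ∀ v ∈ e, v ∉ D

/-!
For `t ∈ Γ*`, the edges of `t` inside `V ∖ D` form a spanning tree of `G_-`, since every tree
path from a vertex of `V ∖ D` to `ρ` stays in `V ∖ D`. Conversely, replacing this part of `t` by
any spanning tree of `G_-` yields again a spanning tree in `Γ*`: the new graph is connected,
because a vertex of `D` follows its path in `t` until it leaves `D`, and it has as many edges as
`t`. Hence `t ↦ t ∖ E(G_-)` is injective on each fibre of `t ↦ t ∩ E(G_-)` over a spanning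
tree of `G_-`, and maps all these fibres onto the same set.
-/

open SimpleGraph

lemma edgeSet_fromEdgeSet_coe_finset {W : Type*} {t : Finset (Sym2 W)}
    (hnd : ∀ e ∈ t, ¬ e.IsDiag) : (fromEdgeSet (↑t : Set (Sym2 W))).edgeSet = ↑t := by
  rw [edgeSet_fromEdgeSet, sdiff_eq_left, Set.disjoint_left]
  exact hnd

section SpanningTree

variable {W : Type*} [Fintype W] {H : SimpleGraph W} {t : Finset (Sym2 W)}

lemma spTree_iff_connected_and_card (hsub : ↑t ⊆ H.edgeSet) (hnd : ∀ e ∈ t, ¬ e.IsDiag) :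
    SpTree H t ↔ (fromEdgeSet (↑t : Set (Sym2 W))).Connected ∧ #t + 1 = Fintype.card W := by
  rw [SpTree, isTree_iff_connected_and_card, edgeSet_fromEdgeSet_coe_finset hnd,
    Nat.card_coe_set_eq, Set.ncard_coe_finset, Nat.card_eq_fintype_card]
  exact ⟨fun h => h.2.2, fun h => ⟨hsub, hnd, h⟩⟩

lemma SpTree.card_add_one (h : SpTree H t) : #t + 1 = Fintype.card W :=
  ((spTree_iff_connected_and_card h.1 h.2.1).mp h).2

end SpanningTree

lemma Sym2.forall_mem_iff_mem_range_map_val {V : Type*} {p : V → Prop} {e : Sym2 V} :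
    (∀ v ∈ e, p v) ↔ e ∈ Set.range (Sym2.map (Subtype.val : Subtype p → V)) := by
  refine ⟨fun h => ⟨e.attachWith h, by simp⟩, ?_⟩
  rintro ⟨e, rfl⟩ v hv
  obtain ⟨x, -, rfl⟩ := Sym2.mem_map.mp hv
  exact x.2

section TouchE

variable {V : Type*} {D : Finset V} {t : Finset (Sym2 V)}

noncomputable def touchE (t : Finset (Sym2 V)) (D : Finset V) : Finset (Sym2 V) :=
  t.filter fun e => ¬ ∀ v ∈ e, v ∉ D

lemma mem_touchE {e : Sym2 V} : e ∈ touchE t D ↔ e ∈ t ∧ ¬ ∀ v ∈ e, v ∉ D :=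
  mem_filter

lemma touchE_subset : touchE t D ⊆ t :=
  filter_subset _ _

lemma card_restrictE_add_card_touchE : #(restrictE t D) + #(touchE t D) = #t :=
  card_filter_add_card_filter_not _

lemma SimpleGraph.Walk.reachable_of_touchE_subset {ρ : V} {u : Finset (Sym2 V)}
    (htu : touchE t D ⊆ u)
    (hout : ∀ w ∉ D, (fromEdgeSet (↑u : Set (Sym2 V))).Reachable w ρ) {v : V}
    (p : (fromEdgeSet (↑t : Set (Sym2 V))).Walk v ρ) :
    (fromEdgeSet (↑u : Set (Sym2 V))).Reachable v ρ := by
  induction p with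
  | nil => exact Reachable.refl _
  | @cons v x _ hadj p ih =>
    by_cases hv : v ∈ D
    · have hvx : s(v, x) ∈ touchE t D :=
        mem_touchE.mpr ⟨((fromEdgeSet_adj _).mp hadj).1, fun h => h v (Sym2.mem_mk_left v x) hv⟩
      exact (Adj.reachable ((fromEdgeSet_adj _).mpr ⟨htu hvx, hadj.ne⟩)).trans (ih hout)
    · exact hout v hv

end TouchE

section LiftedEdges

variable {V : Type*} [DecidableEq V] {D : Finset V} {t : Finset (Sym2 V)}
  {s : Finset (Sym2 {v // v ∉ D})}

lemma forall_notMem_of_mem_image_map_val {e : Sym2 V}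
    (he : e ∈ s.image (Sym2.map Subtype.val)) :
    ∀ v ∈ e, v ∉ D :=
  Sym2.forall_mem_iff_mem_range_map_val.mpr ((Finset.mem_image.mp he).imp fun _ h => h.2)

lemma card_image_map_val (s : Finset (Sym2 {v // v ∉ D})) :
    #(s.image (Sym2.map Subtype.val)) = #s :=
  card_image_of_injective s (Sym2.map.injective Subtype.val_injective)

lemma touchE_union_image_eq_self (h : restrictE t D = s.image (Sym2.map Subtype.val)) :
    touchE t D ∪ s.image (Sym2.map Subtype.val) = t := by
  rw [← h, union_comm]
  exact filter_union_filter_not_eq _ _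

lemma restrictE_touchE_union_image :
    restrictE (touchE t D ∪ s.image (Sym2.map Subtype.val)) D =
      s.image (Sym2.map Subtype.val) := by
  ext e
  have := forall_notMem_of_mem_image_map_val (s := s) (e := e)
  simp only [restrictE, touchE, mem_filter, mem_union]
  tauto

lemma touchE_touchE_union_image :
    touchE (touchE t D ∪ s.image (Sym2.map Subtype.val)) D = touchE t D := by
  ext e
  have := forall_notMem_of_mem_image_map_val (s := s) (e := e)
  simp only [touchE, mem_filter, mem_union]
  tauto

lemma image_map_val_subset_edgeSet {G : SimpleGraph V}
    (hs : (↑s : Set (Sym2 {v // v ∉ D})) ⊆ (G.induce {v | v ∉ D}).edgeSet) :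
    ↑(s.image (Sym2.map Subtype.val)) ⊆ G.edgeSet := by
  intro e he
  obtain ⟨e, he', rfl⟩ := Finset.mem_image.mp he
  exact (Embedding.induce _).toHom.map_mem_edgeSet (hs he')

lemma not_isDiag_of_mem_image_map_val (hs : ∀ e ∈ s, ¬ e.IsDiag) :
    ∀ e ∈ s.image (Sym2.map Subtype.val), ¬ e.IsDiag := by
  simp only [mem_image, forall_exists_index, and_imp]
  rintro _ e he rfl
  rw [Sym2.isDiag_map Subtype.val_injective]
  exact hs e he

variable {G : SimpleGraph V} {ρ : V}

def valHom {u : Finset (Sym2 V)} (h : s.image (Sym2.map Subtype.val) ⊆ u) :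
    fromEdgeSet (↑s : Set (Sym2 {v // v ∉ D})) →g fromEdgeSet (↑u : Set (Sym2 V)) where
  toFun := Subtype.val
  map_rel' {a b} hab := by
    rw [fromEdgeSet_adj] at hab ⊢
    exact ⟨h (mem_image_of_mem _ hab.1), Subtype.coe_injective.ne hab.2⟩

lemma avoidsD_of_connected {u : Finset (Sym2 V)} (hρ : ρ ∉ D)
    (hs : (fromEdgeSet (↑s : Set (Sym2 {v // v ∉ D}))).Connected)
    (hsu : s.image (Sym2.map Subtype.val) ⊆ u) : AvoidsD u ρ D := by
  intro w hw
  obtain ⟨p⟩ := hs.preconnected ⟨w, hw⟩ ⟨ρ, hρ⟩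
  refine ⟨p.map (valHom hsu), fun v hv => ?_⟩
  replace hv : v ∈ (p.map (valHom hsu)).support := hv
  rw [Walk.support_map, List.mem_map] at hv
  obtain ⟨x, -, rfl⟩ := hv
  exact x.2

def treeFiber (G : SimpleGraph V) (ρ : V) (D : Finset V) (s : Finset (Sym2 {v // v ∉ D})) :
    Set (Finset (Sym2 V)) :=
  {t | SpTree G t ∧ AvoidsD t ρ D ∧ restrictE t D = s.image (Sym2.map Subtype.val)}

lemma injOn_touchE_treeFiber (s : Finset (Sym2 {v // v ∉ D})) :
    Set.InjOn (touchE · D) (treeFiber G ρ D s) := by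
  intro t₁ h₁ t₂ h₂ (h : touchE t₁ D = touchE t₂ D)
  rw [← touchE_union_image_eq_self h₁.2.2, ← touchE_union_image_eq_self h₂.2.2, h]

variable [Fintype V]

lemma SpTree.exists_restrictE_eq (ht : SpTree G t) (hA : AvoidsD t ρ D) (hρ : ρ ∉ D) :
    ∃ t₁ : Finset (Sym2 {v // v ∉ D}), SpTree (G.induce {v | v ∉ D}) t₁ ∧
      restrictE t D = t₁.image (Sym2.map Subtype.val) := by
  set t₁ : Finset (Sym2 {v // v ∉ D}) :=
    t.preimage (Sym2.map Subtype.val) (Sym2.map.injective Subtype.val_injective).injOn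
  have hind : fromEdgeSet (↑t₁ : Set (Sym2 {v // v ∉ D})) =
      (fromEdgeSet (↑t : Set (Sym2 V))).induce {v | v ∉ D} := by
    ext a b
    simp [t₁, Subtype.ext_iff]
  have himage : restrictE t D = t₁.image (Sym2.map Subtype.val) := by
    rw [image_preimage]
    ext e
    simp [restrictE, Sym2.forall_mem_iff_mem_range_map_val]
  refine ⟨t₁, ⟨fun e he => ?_, fun e he => ?_, ?_⟩, himage⟩
  · exact (Embedding.induce _).map_mem_edgeSet_iff.mp (ht.1 (mem_preimage.mp he))
  · rw [← Sym2.isDiag_map Subtype.val_injective]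
    exact ht.2.1 _ (mem_preimage.mp he)
  · rw [hind]
    refine ⟨?_, ht.2.2.isAcyclic.induce _⟩
    rw [connected_iff_exists_forall_reachable]
    refine ⟨⟨ρ, hρ⟩, fun ⟨w, hw⟩ => ?_⟩
    obtain ⟨p, hp⟩ := hA w hw
    exact (p.induce {v | v ∉ D} hp).reachable.symm

lemma SpTree.touchE_union_image (hρ : ρ ∉ D) (ht : SpTree G t)
    (hs : SpTree (G.induce {v | v ∉ D}) s) (hcard : #(restrictE t D) = #s) :
    SpTree G (touchE t D ∪ s.image (Sym2.map Subtype.val)) ∧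
      AvoidsD (touchE t D ∪ s.image (Sym2.map Subtype.val)) ρ D := by
  set u := touchE t D ∪ s.image (Sym2.map Subtype.val)
  have hAu : AvoidsD u ρ D := avoidsD_of_connected hρ hs.2.2.connected subset_union_right
  have hsub : ↑u ⊆ G.edgeSet := by
    rw [coe_union]
    exact Set.union_subset ((coe_subset.mpr touchE_subset).trans ht.1)
      (image_map_val_subset_edgeSet hs.1)
  have hnd : ∀ e ∈ u, ¬ e.IsDiag := by
    intro e he
    rcases mem_union.mp he with he | he
    · exact ht.2.1 e (mem_touchE.mp he).1
    · exact not_isDiag_of_mem_image_map_val hs.2.1 e he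
  refine ⟨(spTree_iff_connected_and_card hsub hnd).mpr ⟨?_, ?_⟩, hAu⟩
  · have : Nonempty V := ⟨ρ⟩
    refine (connected_iff_exists_forall_reachable _).mpr ⟨ρ, fun v => ?_⟩
    obtain ⟨p⟩ := ht.2.2.connected.preconnected v ρ
    exact (p.reachable_of_touchE_subset subset_union_left
      fun w hw => (hAu w hw).elim fun p _ => p.reachable).symm
  · have hdisj : Disjoint (touchE t D) (s.image (Sym2.map Subtype.val)) :=
      disjoint_left.mpr fun e he he' =>
        (mem_touchE.mp he).2 (forall_notMem_of_mem_image_map_val he')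
    have := card_restrictE_add_card_touchE (t := t) (D := D)
    have := ht.card_add_one
    rw [card_union_of_disjoint hdisj, card_image_map_val]
    omega

lemma touchE_image_treeFiber_subset (hρ : ρ ∉ D) {s₁ s₂ : Finset (Sym2 {v // v ∉ D})}
    (h₁ : SpTree (G.induce {v | v ∉ D}) s₁) (h₂ : SpTree (G.induce {v | v ∉ D}) s₂) :
    (touchE · D) '' treeFiber G ρ D s₁ ⊆ (touchE · D) '' treeFiber G ρ D s₂ := by
  rintro _ ⟨t, ⟨ht, -, hres⟩, rfl⟩
  have hcard : #(restrictE t D) = #s₂ := by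
    have := h₁.card_add_one
    have := h₂.card_add_one
    rw [hres, card_image_map_val]
    omega
  obtain ⟨hsp, hA⟩ := ht.touchE_union_image hρ h₂ hcard
  exact ⟨_, ⟨hsp, hA, restrictE_touchE_union_image⟩, touchE_touchE_union_image⟩

lemma ncard_treeFiber_eq (hρ : ρ ∉ D) {s₁ s₂ : Finset (Sym2 {v // v ∉ D})}
    (h₁ : SpTree (G.induce {v | v ∉ D}) s₁) (h₂ : SpTree (G.induce {v | v ∉ D}) s₂) :
    (treeFiber G ρ D s₁).ncard = (treeFiber G ρ D s₂).ncard := by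
  rw [← (injOn_touchE_treeFiber s₁).ncard_image, ← (injOn_touchE_treeFiber s₂).ncard_image,
    (touchE_image_treeFiber_subset hρ h₁ h₂).antisymm
      (touchE_image_treeFiber_subset hρ h₂ h₁)]

end LiftedEdges

theorem statement14_general {V : Type*} [Fintype V] [DecidableEq V] (G : SimpleGraph V)
    (ρ : V) (D : Finset V) (hρD : ρ ∉ D) :
    (∀ t : Finset (Sym2 V), SpTree G t → AvoidsD t ρ D →
      ∃ t₁ : Finset (Sym2 {v : V // v ∉ D}),
        SpTree (G.induce {v : V | v ∉ D}) t₁ ∧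
        restrictE t D = t₁.image (Sym2.map Subtype.val)) ∧
    ∀ t₁ t₂ : Finset (Sym2 {v : V // v ∉ D}),
      SpTree (G.induce {v : V | v ∉ D}) t₁ → SpTree (G.induce {v : V | v ∉ D}) t₂ →
      Set.ncard {t : Finset (Sym2 V) | SpTree G t ∧ AvoidsD t ρ D ∧
          restrictE t D = t₁.image (Sym2.map Subtype.val)} =
      Set.ncard {t : Finset (Sym2 V) | SpTree G t ∧ AvoidsD t ρ D ∧
          restrictE t D = t₂.image (Sym2.map Subtype.val)} :=
  ⟨fun _ ht hA => ht.exists_restrictE_eq hA hρD,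
    fun _ _ h₁ h₂ => ncard_treeFiber_eq hρD h₁ h₂⟩

theorem statement14 {V : Type*} [Fintype V] [DecidableEq V] (G : SimpleGraph V)
    (hG : G.Connected) (ρ : V) (D : Finset V) (hρD : ρ ∉ D)
    (hΓ : ∃ t : Finset (Sym2 V), SpTree G t ∧ AvoidsD t ρ D) :
    (∀ t : Finset (Sym2 V), SpTree G t → AvoidsD t ρ D →
      ∃ t₁ : Finset (Sym2 {v : V // v ∉ D}),
        SpTree (G.induce {v : V | v ∉ D}) t₁ ∧
        restrictE t D = t₁.image (Sym2.map Subtype.val)) ∧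
    ∀ t₁ t₂ : Finset (Sym2 {v : V // v ∉ D}),
      SpTree (G.induce {v : V | v ∉ D}) t₁ → SpTree (G.induce {v : V | v ∉ D}) t₂ →
      Set.ncard {t : Finset (Sym2 V) | SpTree G t ∧ AvoidsD t ρ D ∧
          restrictE t D = t₁.image (Sym2.map Subtype.val)} =
      Set.ncard {t : Finset (Sym2 V) | SpTree G t ∧ AvoidsD t ρ D ∧
          restrictE t D = t₂.image (Sym2.map Subtype.val)} :=
  statement14_general G ρ D hρD
end
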